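/- arXiv:1106.3809 — 9 statements merged into one kernel-verified Lean document; each statement's English description precedes it below -/
import Mathlib

section
/- Let B be a column-stochastic sampling matrix such that the upper-triangular submatrix B̃ is invertible and d_j > 0 for all 0 ≤ j ≤ W. Then the Fisher information matrix J(θ) = (1/d₀)·b₀b₀ᵀ + J̃(θ) is invertible, and its inverse is J(θ)⁻¹ = J̃(θ)⁻¹ − (d₀ + b₀ᵀ J̃(θ)⁻¹ b₀)⁻¹ · J̃(θ)⁻¹ b₀ b₀ᵀ J̃(θ)⁻¹, where J̃(θ)⁻¹ = B̃⁻¹ diag(d₁,…,d_W) (B̃⁻¹)ᵀ. -/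
open Matrix

/-!
Splitting off the row `j = 0` of `B` writes `J` as the rank-one update
`J̃ + d₀⁻¹ • b₀ b₀ᵀ` of `J̃ = B̃ᵀ D̃ B̃`, which is invertible with inverse `B̃⁻¹ D̃⁻¹ B̃⁻ᵀ`.
The Sherman–Morrison formula then inverts `J`; its denominator `d₀ + b₀ᵀ J̃⁻¹ b₀` is positive
because `d₀ > 0` and `J̃⁻¹` is positive semidefinite.
-/

theorem Matrix.transpose_mul_diagonal_mul_eq_smul_vecMulVec_add {n α : Type*} [CommRing α]
    {k : ℕ} (B : Matrix (Fin (k + 1)) n α) (w : Fin (k + 1) → α) :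
    Bᵀ * diagonal w * B = w 0 • vecMulVec (B 0) (B 0) +
      (B.submatrix Fin.succ id)ᵀ * diagonal (fun j : Fin k => w j.succ) *
        B.submatrix Fin.succ id := by
  ext i j
  rw [add_apply, mul_apply, mul_apply]
  simp only [mul_diagonal, transpose_apply, Fin.sum_univ_succ, smul_apply, vecMulVec_apply,
    submatrix_apply, id, smul_eq_mul]
  ring

theorem Matrix.inv_transpose_mul_diagonal_mul {n K : Type*} [Fintype n] [DecidableEq n] [Field K]
    (A : Matrix n n K) {w : n → K} (hw : ∀ i, w i ≠ 0) :
    (Aᵀ * diagonal w * A)⁻¹ = A⁻¹ * diagonal w⁻¹ * A⁻¹ᵀ := by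
  have hdiag : (diagonal w)⁻¹ = diagonal w⁻¹ := inv_eq_right_inv <| by
    rw [diagonal_mul_diagonal, ← diagonal_one]
    exact congrArg diagonal (funext fun i => mul_inv_cancel₀ (hw i))
  rw [mul_inv_rev, mul_inv_rev, hdiag, transpose_nonsing_inv, mul_assoc]

theorem Matrix.PosSemidef.mul_diagonal_mul_transpose {m n R : Type*} [Fintype m] [DecidableEq m]
    [Fintype n]
    [CommRing R] [PartialOrder R] [StarRing R] [TrivialStar R] [StarOrderedRing R]
    (A : Matrix n m R) {w : m → R} (hw : 0 ≤ w) : (A * diagonal w * Aᵀ).PosSemidef := by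
  simpa only [conjTranspose_eq_transpose_of_trivial] using
    (PosSemidef.diagonal hw).mul_mul_conjTranspose_same A

/-- The Sherman–Morrison formula, as a right inverse. -/
theorem Matrix.smul_vecMulVec_add_mul_eq_one {n K : Type*} [Fintype n] [DecidableEq n] [Field K]
    {A : Matrix n n K} (hA : IsUnit A.det) {a : K} (ha : a ≠ 0) (u v : n → K)
    (hc : a⁻¹ + v ⬝ᵥ (A⁻¹ *ᵥ u) ≠ 0) :
    (a • vecMulVec u v + A) *
      (A⁻¹ - (a⁻¹ + v ⬝ᵥ (A⁻¹ *ᵥ u))⁻¹ • vecMulVec (A⁻¹ *ᵥ u) (v ᵥ* A⁻¹)) = 1 := by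
  set s := v ⬝ᵥ (A⁻¹ *ᵥ u)
  set c := a⁻¹ + s with hc_def
  have hAA : A * A⁻¹ = 1 := mul_nonsing_inv A hA
  have h₁ : vecMulVec u v * A⁻¹ = vecMulVec u (v ᵥ* A⁻¹) := vecMulVec_mul u v A⁻¹
  have h₂ : vecMulVec u v * vecMulVec (A⁻¹ *ᵥ u) (v ᵥ* A⁻¹) = s • vecMulVec u (v ᵥ* A⁻¹) := by
    rw [vecMulVec_mul_vecMulVec, vecMulVec_smul]
  have h₃ : A * vecMulVec (A⁻¹ *ᵥ u) (v ᵥ* A⁻¹) = vecMulVec u (v ᵥ* A⁻¹) := by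
    rw [mul_vecMulVec, mulVec_mulVec, hAA, one_mulVec]
  have hcoeff : a - a * (c⁻¹ * s) - c⁻¹ = 0 := by
    field_simp
    rw [hc_def]
    field_simp
    ring
  rw [add_mul, mul_sub, mul_sub, Matrix.smul_mul, Matrix.smul_mul, Matrix.mul_smul,
    Matrix.mul_smul, h₁, h₂, h₃, hAA, ← sub_eq_zero]
  calc _ = (a - a * (c⁻¹ * s) - c⁻¹) • vecMulVec u (v ᵥ* A⁻¹) := by module
    _ = 0 := by rw [hcoeff, zero_smul]

theorem stmt_0_general (W : ℕ)
    (B : Matrix (Fin (W + 1)) (Fin W) ℝ)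
    (Bt : Matrix (Fin W) (Fin W) ℝ) (hBt : ∀ j k, Bt j k = B j.succ k)
    (hBtinv : IsUnit Bt.det)
    (b0 : Fin W → ℝ) (hb0 : ∀ k, b0 k = B 0 k)
    (d : Fin (W + 1) → ℝ)
    (hdpos : ∀ j, 0 < d j)
    (J Jt : Matrix (Fin W) (Fin W) ℝ)
    (hJ : J = Bᵀ * Matrix.diagonal (fun j => (d j)⁻¹) * B)
    (hJt : Jt = Btᵀ * Matrix.diagonal (fun j : Fin W => (d j.succ)⁻¹) * Bt) :
    J = (d 0)⁻¹ • Matrix.vecMulVec b0 b0 + Jt ∧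
    IsUnit J.det ∧
    Jt⁻¹ = Bt⁻¹ * Matrix.diagonal (fun j : Fin W => d j.succ) * (Bt⁻¹)ᵀ ∧
    J⁻¹ = Jt⁻¹ - (d 0 + b0 ⬝ᵥ (Jt⁻¹ *ᵥ b0))⁻¹ •
      Matrix.vecMulVec (Jt⁻¹ *ᵥ b0) (b0 ᵥ* Jt⁻¹) := by
  obtain rfl : b0 = B 0 := funext hb0
  have hBt' : Bt = B.submatrix Fin.succ id := Matrix.ext hBt
  have hdec : J = (d 0)⁻¹ • vecMulVec (B 0) (B 0) + Jt := by
    rw [hJ, hJt, transpose_mul_diagonal_mul_eq_smul_vecMulVec_add, hBt']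
  have hJtinv : Jt⁻¹ = Bt⁻¹ * diagonal (fun j : Fin W => d j.succ) * (Bt⁻¹)ᵀ := by
    rw [hJt, inv_transpose_mul_diagonal_mul Bt fun j : Fin W => inv_ne_zero (hdpos j.succ).ne']
    simp only [Pi.inv_def, inv_inv]
  have hJtdet : IsUnit Jt.det := by
    rw [hJt, det_mul, det_mul, det_transpose, det_diagonal]
    refine (hBtinv.mul (isUnit_iff_ne_zero.2 ?_)).mul hBtinv
    exact Finset.prod_ne_zero_iff.2 fun j _ => inv_ne_zero (hdpos j.succ).ne'
  have hquad : 0 ≤ B 0 ⬝ᵥ (Jt⁻¹ *ᵥ B 0) := by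
    rw [hJtinv]
    simpa using (PosSemidef.mul_diagonal_mul_transpose Bt⁻¹
      fun j => (hdpos j.succ).le).dotProduct_mulVec_nonneg (B 0)
  have hright := smul_vecMulVec_add_mul_eq_one hJtdet (inv_ne_zero (hdpos 0).ne') (B 0) (B 0)
    (by rw [inv_inv]; exact (add_pos_of_pos_of_nonneg (hdpos 0) hquad).ne')
  rw [inv_inv, ← hdec] at hright
  exact ⟨hdec, isUnit_det_of_right_inverse hright, hJtinv, inv_eq_right_inv hright⟩

/-- For a column-stochastic sampling matrix `B` with invertible
upper-triangular part `B̃` and positive sampled-flow probabilities `d`, the Fisher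
information `J(θ) = (1/d₀)·b₀b₀ᵀ + J̃(θ)` is invertible, with inverse
`J⁻¹ = J̃⁻¹ − (d₀ + b₀ᵀ J̃⁻¹ b₀)⁻¹ · J̃⁻¹ b₀ b₀ᵀ J̃⁻¹`,
where `J̃⁻¹ = B̃⁻¹ diag(d₁,…,d_W) (B̃⁻¹)ᵀ`. Rows of `B` are indexed by
`j : Fin (W+1)` (sampled size `j`), columns by `k : Fin W` (original size `k+1`). -/
theorem stmt_0 (W : ℕ) (hW : 1 ≤ W)
    (θ : Fin W → ℝ) (hθpos : ∀ k, 0 < θ k) (hθsum : ∑ k, θ k = 1)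
    (B : Matrix (Fin (W + 1)) (Fin W) ℝ)
    (hBnonneg : ∀ j k, 0 ≤ B j k)
    (hBtri : ∀ (j : Fin (W + 1)) (k : Fin W), (k : ℕ) + 1 < (j : ℕ) → B j k = 0)
    (hBcol : ∀ k, ∑ j, B j k = 1)
    (Bt : Matrix (Fin W) (Fin W) ℝ) (hBt : ∀ j k, Bt j k = B j.succ k)
    (hBtinv : IsUnit Bt.det)
    (b0 : Fin W → ℝ) (hb0 : ∀ k, b0 k = B 0 k)
    (d : Fin (W + 1) → ℝ) (hd : d = B *ᵥ θ)
    (hdpos : ∀ j, 0 < d j)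
    (J Jt : Matrix (Fin W) (Fin W) ℝ)
    (hJ : J = Bᵀ * Matrix.diagonal (fun j => (d j)⁻¹) * B)
    (hJt : Jt = Btᵀ * Matrix.diagonal (fun j : Fin W => (d j.succ)⁻¹) * Bt) :
    J = (d 0)⁻¹ • Matrix.vecMulVec b0 b0 + Jt ∧
    IsUnit J.det ∧
    Jt⁻¹ = Bt⁻¹ * Matrix.diagonal (fun j : Fin W => d j.succ) * (Bt⁻¹)ᵀ ∧
    J⁻¹ = Jt⁻¹ - (d 0 + b0 ⬝ᵥ (Jt⁻¹ *ᵥ b0))⁻¹ •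
      Matrix.vecMulVec (Jt⁻¹ *ᵥ b0) (b0 ᵥ* Jt⁻¹) :=
  stmt_0_general W B Bt hBt hBtinv b0 hb0 d hdpos J Jt hJ hJt
end

section
/- Let B be a column-stochastic sampling matrix with B̃ invertible and d_j > 0 for all 0 ≤ j ≤ W, and suppose the top row of B is constant: b₀ = q·𝟙_W for some constant q with 0 ≤ q < 1. Set p = 1 − q. Then J(θ)⁻¹ = J̃(θ)⁻¹ − (q/p)·θθᵀ. -/
/-!
Splitting off row `0` of `B` gives `J = J̃ + q·𝟙𝟙ᵀ`, because `b₀ = q𝟙` and `d₀ = q·Σθ = q`.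
Since `B̃θ = (d₁,…,d_W)`, one gets `J̃θ = B̃ᵀ𝟙 = p𝟙` (the columns of `B̃` sum to `1 − q`),
so `𝟙ᵀJ̃⁻¹ = θᵀ/p`, and the Sherman–Morrison formula for the rank-one update `q·𝟙𝟙ᵀ`
yields the correction `−(q/p)·θθᵀ`.
-/

open Matrix

namespace Matrix

variable {m n R K : Type*}

theorem isSymm_transpose_mul_diagonal_mul [Fintype m] [DecidableEq m] [CommSemiring R]
    (B : Matrix m n R) (w : m → R) : (Bᵀ * diagonal w * B).IsSymm := by
  simp only [IsSymm, transpose_mul, transpose_transpose, diagonal_transpose, Matrix.mul_assoc]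

theorem transpose_mul_diagonal_mul_eq_add_succ [CommSemiring R] {k : ℕ}
    (B : Matrix (Fin (k + 1)) n R) (w : Fin (k + 1) → R) :
    Bᵀ * diagonal w * B = w 0 • vecMulVec (B 0) (B 0) +
      (B.submatrix Fin.succ id)ᵀ * diagonal (fun j : Fin k => w j.succ) *
        B.submatrix Fin.succ id := by
  ext i l
  simp [mul_apply, Fin.sum_univ_succ, diagonal_apply, vecMulVec_apply, mul_assoc, mul_left_comm]

theorem transpose_mul_diagonal_inv_mulVec_mul_mulVec [Fintype m] [DecidableEq m] [Fintype n]
    [Field K] (B : Matrix m n K) {θ : n → K} (hBθ : ∀ j, (B *ᵥ θ) j ≠ 0) :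
    (Bᵀ * diagonal (fun j => ((B *ᵥ θ) j)⁻¹) * B) *ᵥ θ = 1 ᵥ* B := by
  rw [← mulVec_mulVec, ← mulVec_mulVec, mulVec_transpose]
  congr 1
  ext j
  rw [mulVec_diagonal, inv_mul_cancel₀ (hBθ j), Pi.one_apply]

/-- Sherman–Morrison: `A⁻¹u = θ/p` makes the denominator `1 + q·uᵀA⁻¹u` equal to
`(p + q)/p = 1/p`. -/
theorem inv_add_smul_vecMulVec_self [Fintype n] [DecidableEq n] [Field K] {A : Matrix n n K}
    (hA : IsUnit A.det) (hsymm : A.IsSymm) {u θ : n → K} {p q : K} (hp : p ≠ 0)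
    (hpq : p + q = 1) (hAθ : A *ᵥ θ = p • u) (huθ : u ⬝ᵥ θ = 1) :
    (A + q • vecMulVec u u)⁻¹ = A⁻¹ - (q / p) • vecMulVec θ θ := by
  have huA : u ᵥ* A⁻¹ = p⁻¹ • θ := by
    have hθA : θ ᵥ* A = p • u := by rw [← hsymm.eq, vecMul_transpose, hAθ]
    rw [show u = (p⁻¹ • θ) ᵥ* A by rw [smul_vecMul, hθA, smul_smul, inv_mul_cancel₀ hp, one_smul],
      vecMul_vecMul, mul_nonsing_inv A hA, vecMul_one]
  have hcoef : q / p * p - q * p⁻¹ + q * (q / p) = 0 := by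
    field_simp
    linear_combination q * hpq
  apply inv_eq_right_inv
  rw [add_mul, mul_sub, mul_sub, mul_nonsing_inv A hA, Matrix.mul_smul, mul_vecMulVec, hAθ,
    Matrix.smul_mul, vecMulVec_mul, huA, Matrix.smul_mul, Matrix.mul_smul,
    vecMulVec_mul_vecMulVec, huθ, one_smul]
  simp only [smul_vecMulVec, vecMulVec_smul]
  linear_combination (norm := module) (-hcoef) • vecMulVec u θ

end Matrix

theorem stmt_1_general (W : ℕ)
    (θ : Fin W → ℝ) (hθsum : ∑ k, θ k = 1)
    (B : Matrix (Fin (W + 1)) (Fin W) ℝ)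
    (hBcol : ∀ k, ∑ j, B j k = 1)
    (Bt : Matrix (Fin W) (Fin W) ℝ) (hBt : ∀ j k, Bt j k = B j.succ k)
    (hBtinv : IsUnit Bt.det)
    (q p : ℝ) (hq1 : q < 1) (hp : p = 1 - q)
    (hb0 : ∀ k, B 0 k = q)
    (d : Fin (W + 1) → ℝ) (hd : d = B *ᵥ θ)
    (hdpos : ∀ j, 0 < d j)
    (J Jt : Matrix (Fin W) (Fin W) ℝ)
    (hJ : J = Bᵀ * Matrix.diagonal (fun j => (d j)⁻¹) * B)
    (hJt : Jt = Btᵀ * Matrix.diagonal (fun j : Fin W => (d j.succ)⁻¹) * Bt) :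
    J⁻¹ = Jt⁻¹ - (q / p) • Matrix.vecMulVec θ θ := by
  obtain rfl : Bt = B.submatrix Fin.succ id := Matrix.ext hBt
  subst hd
  have hrow0 : B 0 = q • 1 := funext fun k => by simp [hb0]
  have hd0 : (B *ᵥ θ) 0 = q := by
    simp [mulVec, dotProduct, hb0, ← Finset.mul_sum, hθsum]
  have hJsplit : J = Jt + q • vecMulVec 1 1 := by
    rw [hJ, hJt, transpose_mul_diagonal_mul_eq_add_succ, hd0, hrow0, smul_vecMulVec,
      vecMulVec_smul, smul_smul, smul_smul, inv_mul_mul_self, add_comm]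
  have hcolsum : 1 ᵥ* B.submatrix Fin.succ id = p • 1 := by
    ext k
    have := hBcol k
    rw [Fin.sum_univ_succ, hb0] at this
    simp only [vecMul, dotProduct, Pi.one_apply, one_mul, submatrix_apply, id, Pi.smul_apply,
      smul_eq_mul, mul_one, hp]
    linarith
  have hJtθ : Jt *ᵥ θ = p • 1 := by
    rw [hJt, ← hcolsum]
    exact transpose_mul_diagonal_inv_mulVec_mul_mulVec _ fun j => (hdpos j.succ).ne'
  have hJtdet : IsUnit Jt.det := by
    rw [hJt, det_mul, det_mul, det_transpose, det_diagonal]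
    exact (hBtinv.mul (isUnit_iff_ne_zero.mpr
      (Finset.prod_ne_zero_iff.mpr fun j _ => inv_ne_zero (hdpos j.succ).ne'))).mul hBtinv
  rw [hJsplit]
  refine inv_add_smul_vecMulVec_self hJtdet (hJt ▸ isSymm_transpose_mul_diagonal_mul _ _)
    (by linarith) (by linarith) hJtθ ?_
  simp [one_dotProduct, hθsum]

/-- If the top row of a column-stochastic sampling matrix `B` is the
constant `q` with `0 ≤ q < 1`, then with `p = 1 − q` we have
`J(θ)⁻¹ = J̃(θ)⁻¹ − (q/p)·θθᵀ`. Rows of `B` are indexed by `j : Fin (W+1)`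
(sampled size `j`), columns by `k : Fin W` (original size `k+1`). -/
theorem stmt_1 (W : ℕ) (hW : 1 ≤ W)
    (θ : Fin W → ℝ) (hθpos : ∀ k, 0 < θ k) (hθsum : ∑ k, θ k = 1)
    (B : Matrix (Fin (W + 1)) (Fin W) ℝ)
    (hBnonneg : ∀ j k, 0 ≤ B j k)
    (hBtri : ∀ (j : Fin (W + 1)) (k : Fin W), (k : ℕ) + 1 < (j : ℕ) → B j k = 0)
    (hBcol : ∀ k, ∑ j, B j k = 1)
    (Bt : Matrix (Fin W) (Fin W) ℝ) (hBt : ∀ j k, Bt j k = B j.succ k)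
    (hBtinv : IsUnit Bt.det)
    (q p : ℝ) (hq0 : 0 ≤ q) (hq1 : q < 1) (hp : p = 1 - q)
    (hb0 : ∀ k, B 0 k = q)
    (d : Fin (W + 1) → ℝ) (hd : d = B *ᵥ θ)
    (hdpos : ∀ j, 0 < d j)
    (J Jt : Matrix (Fin W) (Fin W) ℝ)
    (hJ : J = Bᵀ * Matrix.diagonal (fun j => (d j)⁻¹) * B)
    (hJt : Jt = Btᵀ * Matrix.diagonal (fun j : Fin W => (d j.succ)⁻¹) * Bt) :
    J⁻¹ = Jt⁻¹ - (q / p) • Matrix.vecMulVec θ θ :=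
  stmt_1_general W θ hθsum B hBcol Bt hBt hBtinv q p hq1 hp hb0 d hd hdpos J Jt hJ hJt
end

section
/- Let B be a column-stochastic sampling matrix with B̃ invertible and d_j > 0 for all 1 ≤ j ≤ W. Then J̃(θ)⁻¹ − J(θ)⁻¹ is positive semidefinite (i.e., J(θ)⁻¹ ≤ J̃(θ)⁻¹ in the Loewner order), with equality J(θ)⁻¹ = J̃(θ)⁻¹ if and only if b₀ = 0 (no flow can evaporate). (When b₀ = 0 one interprets J(θ) as J̃(θ); otherwise d₀ > 0 and J(θ) is as defined.) -/
/-!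
Removing row 0 of `B` splits the Fisher information as `J = J̃ + d₀⁻¹ b₀ b₀ᵀ`, a positive
definite matrix plus a positive semidefinite rank-one term. Matrix inversion is antitone on
positive definite matrices, so `J⁻¹ ≤ J̃⁻¹`; and the inverses coincide iff the rank-one term
vanishes, which for `d₀ = b₀ ⬝ θ` with `θ > 0` and `b₀ ≥ 0` happens iff `b₀ = 0`.
-/

open Matrix

namespace Matrix

variable {n : Type*}

lemma dotProduct_eq_zero_iff_of_nonneg_of_pos [Fintype n] {R : Type*} [Semiring R]
    [PartialOrder R] [IsOrderedRing R] [NoZeroDivisors R] {u v : n → R} (hu : 0 ≤ u)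
    (hv : ∀ k, 0 < v k) : u ⬝ᵥ v = 0 ↔ u = 0 := by
  rw [dotProduct, Finset.sum_eq_zero_iff_of_nonneg fun k _ => mul_nonneg (hu k) (hv k).le,
    funext_iff]
  simp only [Finset.mem_univ, true_implies, mul_eq_zero, (hv _).ne', or_false, Pi.zero_apply]

lemma transpose_mul_diagonal_mul_eq_succ_add {R : Type*} [CommSemiring R] {W : ℕ}
    (B : Matrix (Fin (W + 1)) n R) (w : Fin (W + 1) → R) :
    Bᵀ * diagonal w * B = (B.submatrix Fin.succ id)ᵀ * diagonal (w ∘ Fin.succ) *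
      B.submatrix Fin.succ id + w 0 • vecMulVec (B 0) (B 0) := by
  ext k l
  simp only [Matrix.mul_assoc, mul_apply (M := Bᵀ), mul_apply (M := (B.submatrix _ _)ᵀ),
    diagonal_mul, transpose_apply, add_apply, smul_apply, vecMulVec_apply, submatrix_apply, id,
    Function.comp_apply, Fin.sum_univ_succ, smul_eq_mul]
  ring

lemma PosDef.posSemidef_inv_sub_inv [Fintype n] [DecidableEq n] {K : Type*} [Field K]
    [PartialOrder K] [StarRing K] [StarOrderedRing K] {A B : Matrix n n K} (hA : A.PosDef)
    (hB : B.PosDef) (hAB : (B - A).PosSemidef) : (A⁻¹ - B⁻¹).PosSemidef := by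
  have := hA.isUnit.invertible
  have := hB.isUnit.invertible
  have key : A⁻¹ - B⁻¹ =
      (B⁻¹)ᴴ * (B - A) * B⁻¹ + (B⁻¹)ᴴ * ((B - A)ᴴ * A⁻¹ * (B - A)) * B⁻¹ := by
    rw [hB.inv.isHermitian.eq, hAB.isHermitian.eq]
    simp only [Matrix.mul_sub, Matrix.sub_mul, Matrix.mul_assoc, inv_mul_of_invertible,
      mul_inv_of_invertible, Matrix.mul_one, Matrix.one_mul, inv_mul_cancel_left_of_invertible]
    abel
  rw [key]
  exact (hAB.conjTranspose_mul_mul_same _).add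
    ((hA.inv.posSemidef.conjTranspose_mul_mul_same _).conjTranspose_mul_mul_same _)

end Matrix

theorem stmt_2_general (W : ℕ)
    (θ : Fin W → ℝ) (hθpos : ∀ k, 0 < θ k)
    (B : Matrix (Fin (W + 1)) (Fin W) ℝ)
    (hBnonneg : ∀ j k, 0 ≤ B j k)
    (Bt : Matrix (Fin W) (Fin W) ℝ) (hBt : ∀ j k, Bt j k = B j.succ k)
    (hBtinv : IsUnit Bt.det)
    (d : Fin (W + 1) → ℝ) (hd : d = B *ᵥ θ)
    (hdpos : ∀ j : Fin W, 0 < d j.succ)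
    (J Jt : Matrix (Fin W) (Fin W) ℝ)
    (hJ : J = Bᵀ * Matrix.diagonal (fun j => (d j)⁻¹) * B)
    (hJt : Jt = Btᵀ * Matrix.diagonal (fun j : Fin W => (d j.succ)⁻¹) * Bt) :
    (Jt⁻¹ - J⁻¹).PosSemidef ∧ (J⁻¹ = Jt⁻¹ ↔ ∀ k, B 0 k = 0) := by
  have hd₀ : d 0 = B 0 ⬝ᵥ θ := by rw [hd]; rfl
  have hb₀ : 0 ≤ B 0 := hBnonneg 0
  have hsplit : J = Jt + (d 0)⁻¹ • vecMulVec (B 0) (B 0) := by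
    rw [hJ, hJt, Matrix.ext hBt, transpose_mul_diagonal_mul_eq_succ_add]; rfl
  have hrankOne : ((d 0)⁻¹ • vecMulVec (B 0) (B 0)).PosSemidef := by
    have hd₀_nonneg : 0 ≤ d 0 := hd₀ ▸ dotProduct_nonneg_of_nonneg hb₀ fun k => (hθpos k).le
    simpa using (posSemidef_vecMulVec_self_star (B 0)).smul (inv_nonneg.2 hd₀_nonneg)
  have hJt_pos : Jt.PosDef := by
    rw [hJt, ← conjTranspose_eq_transpose_of_trivial]
    exact (PosDef.diagonal fun j => inv_pos.2 (hdpos j)).conjTranspose_mul_mul_same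
      (mulVec_injective_iff_isUnit.2 ((isUnit_iff_isUnit_det Bt).2 hBtinv))
  have hJ_pos : J.PosDef := hsplit ▸ hJt_pos.add_posSemidef hrankOne
  refine ⟨hJt_pos.posSemidef_inv_sub_inv hJ_pos (by rwa [hsplit, add_sub_cancel_left]), ?_⟩
  calc J⁻¹ = Jt⁻¹ ↔ J = Jt := ⟨fun h => inv_inj h hJ_pos.det_pos.ne'.isUnit, congrArg _⟩
    _ ↔ (d 0)⁻¹ • vecMulVec (B 0) (B 0) = 0 := by rw [hsplit, add_eq_left]
    _ ↔ B 0 = 0 := by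
      rw [smul_eq_zero, vecMulVec_eq_zero, or_self, inv_eq_zero, hd₀,
        dotProduct_eq_zero_iff_of_nonneg_of_pos hb₀ hθpos, or_self]
    _ ↔ ∀ k, B 0 k = 0 := funext_iff

/-- For a column-stochastic sampling matrix `B` with invertible `B̃` and
`d_j > 0` for `1 ≤ j ≤ W`, the difference `J̃(θ)⁻¹ − J(θ)⁻¹` is positive semidefinite,
with equality `J(θ)⁻¹ = J̃(θ)⁻¹` if and only if `b₀ = 0`. (In Lean `(0:ℝ)⁻¹ = 0`, so the
definition `J = Bᵀ D B` with `D₀₀ = d₀⁻¹` automatically interprets `J(θ)` as `J̃(θ)`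
when `b₀ = 0`; otherwise `d₀ > 0` and `J(θ)` is as usual.) -/
theorem stmt_2 (W : ℕ) (hW : 1 ≤ W)
    (θ : Fin W → ℝ) (hθpos : ∀ k, 0 < θ k) (hθsum : ∑ k, θ k = 1)
    (B : Matrix (Fin (W + 1)) (Fin W) ℝ)
    (hBnonneg : ∀ j k, 0 ≤ B j k)
    (hBtri : ∀ (j : Fin (W + 1)) (k : Fin W), (k : ℕ) + 1 < (j : ℕ) → B j k = 0)
    (hBcol : ∀ k, ∑ j, B j k = 1)
    (Bt : Matrix (Fin W) (Fin W) ℝ) (hBt : ∀ j k, Bt j k = B j.succ k)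
    (hBtinv : IsUnit Bt.det)
    (d : Fin (W + 1) → ℝ) (hd : d = B *ᵥ θ)
    (hdpos : ∀ j : Fin W, 0 < d j.succ)
    (J Jt : Matrix (Fin W) (Fin W) ℝ)
    (hJ : J = Bᵀ * Matrix.diagonal (fun j => (d j)⁻¹) * B)
    (hJt : Jt = Btᵀ * Matrix.diagonal (fun j : Fin W => (d j.succ)⁻¹) * Bt) :
    (Jt⁻¹ - J⁻¹).PosSemidef ∧ (J⁻¹ = Jt⁻¹ ↔ ∀ k, B 0 k = 0) :=
  stmt_2_general W θ hθpos B hBnonneg Bt hBt hBtinv d hd hdpos J Jt hJ hJt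
end

section
/- Fix W ≥ 2 and p ∈ (0,1], q = 1 − p. Let B̃ be the W×W upper-triangular matrix with entries B̃_{1k} = p·q^{k−1} for 1 ≤ k ≤ W, B̃_{jk} = p²·q^{k−j} for 2 ≤ j ≤ k ≤ W, and B̃_{jk} = 0 for j > k (the PS+SYN+SEQ matrix). Then B̃ is invertible and its inverse is the upper-bidiagonal matrix with (B̃⁻¹)_{11} = 1/p, (B̃⁻¹)_{12} = −q/p², and for 2 ≤ j ≤ W: (B̃⁻¹)_{jj} = 1/p², (B̃⁻¹)_{j,j+1} = −q/p² (when j+1 ≤ W), all other entries being 0. -/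
/-!
Up to the row scaling `d = (p, p², …, p²)`, `B̃` is the upper-triangular geometric matrix
`G_q` with entries `q^(k-j)` for `j ≤ k`. Since `q^(k-j) - q · q^(k-1-j) = 0` for `j < k`,
multiplying `G_q` on the right by `1 - q • S`, with `S` the superdiagonal shift, leaves the
identity; hence `B̃⁻¹ = (1 - q • S) · diag(d)⁻¹`, which is the stated bidiagonal matrix.
-/

open Matrix

namespace Matrix

variable {R : Type*} [CommRing R] {n : ℕ}

def upperGeometric (a : R) : Matrix (Fin n) (Fin n) R :=
  of fun j k => if j ≤ k then a ^ ((k : ℕ) - j) else 0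

def superdiagonalShift : Matrix (Fin n) (Fin n) R :=
  of fun j k => if (k : ℕ) = j + 1 then 1 else 0

theorem upperGeometric_mul_superdiagonalShift (a : R) (j k : Fin n) :
    (upperGeometric a * superdiagonalShift : Matrix (Fin n) (Fin n) R) j k =
      if j < k then a ^ ((k : ℕ) - 1 - j) else 0 := by
  simp only [mul_apply, upperGeometric, superdiagonalShift, of_apply, mul_ite, mul_one, mul_zero]
  rcases Nat.eq_zero_or_pos (k : ℕ) with hk | hk
  · have : ¬ j < k := by rw [Fin.lt_def]; omega
    simp [hk, this]
  · rw [Finset.sum_eq_single_of_mem ⟨k - 1, by omega⟩ (Finset.mem_univ _)]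
    · simp only [Fin.le_def, Fin.lt_def]
      rw [if_pos (by omega)]
      split_ifs <;> first | rfl | omega
    · intro l _ hl
      exact if_neg fun h => hl (Fin.ext (by simp only; omega))

theorem upperGeometric_mul_one_sub_smul_superdiagonalShift (a : R) :
    upperGeometric a * (1 - a • superdiagonalShift) = (1 : Matrix (Fin n) (Fin n) R) := by
  ext j k
  rw [Matrix.mul_sub, Matrix.mul_one, Matrix.mul_smul, sub_apply, smul_apply,
    upperGeometric_mul_superdiagonalShift, one_apply, upperGeometric, of_apply, smul_eq_mul]
  rcases lt_trichotomy j k with h | rfl | h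
  · have hjk : (k : ℕ) - j = (k - 1 - j) + 1 := by rw [Fin.lt_def] at h; omega
    simp [h.le, h, h.ne, hjk, pow_succ']
  · simp
  · simp [not_le.mpr h, not_lt.mpr h.le, h.ne']

theorem diagonal_mul_upperGeometric_mul_inv {K : Type*} [Field K] (d : Fin n → K)
    (hd : ∀ i, d i ≠ 0) (a : K) :
    diagonal d * upperGeometric a * ((1 - a • superdiagonalShift) * diagonal d⁻¹) = 1 := by
  rw [mul_assoc, ← mul_assoc (upperGeometric a),
    upperGeometric_mul_one_sub_smul_superdiagonalShift, one_mul, diagonal_mul_diagonal, ← diagonal_one]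
  congr 1
  ext i
  simp [hd i]

end Matrix

theorem stmt_8_general (W : ℕ)
    (p q : ℝ) (hp0 : 0 < p)
    (Bt : Matrix (Fin W) (Fin W) ℝ)
    (hBt : ∀ j k : Fin W, Bt j k =
      if (j : ℕ) = 0 then p * q ^ (k : ℕ)
      else if (j : ℕ) ≤ (k : ℕ) then p ^ 2 * q ^ ((k : ℕ) - (j : ℕ))
      else 0) :
    IsUnit Bt.det ∧
    ∀ j k : Fin W, Bt⁻¹ j k =
      if (k : ℕ) = (j : ℕ) then (if (j : ℕ) = 0 then p⁻¹ else (p ^ 2)⁻¹)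
      else if (k : ℕ) = (j : ℕ) + 1 then -q / p ^ 2
      else 0 := by
  set d : Fin W → ℝ := fun j => if (j : ℕ) = 0 then p else p ^ 2
  have hd : ∀ j, d j ≠ 0 := fun j => by dsimp only [d]; split_ifs <;> positivity
  have hB : Bt = diagonal d * upperGeometric q := by
    ext j k
    rw [hBt, diagonal_mul, upperGeometric, of_apply]
    simp only [d, Fin.le_def]
    split_ifs with h0 <;> first | omega | rw [h0, Nat.sub_zero] | ring
  have hinv := hB ▸ diagonal_mul_upperGeometric_mul_inv d hd q
  refine ⟨isUnit_det_of_right_inverse hinv, fun j k => ?_⟩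
  rw [inv_eq_right_inv hinv, mul_diagonal, Matrix.sub_apply, Matrix.smul_apply, one_apply,
    superdiagonalShift, of_apply, Pi.inv_apply]
  simp only [d, Fin.ext_iff]
  split_ifs <;> first | omega | simp [div_eq_mul_inv]

/-- The PS+SYN+SEQ matrix `B̃` with first row `B̃_{1k} = p q^{k−1}` and
entries `B̃_{jk} = p² q^{k−j}` for `2 ≤ j ≤ k ≤ W` (zero below the diagonal) is
invertible; its inverse is upper-bidiagonal with `(B̃⁻¹)_{11} = 1/p`,
`(B̃⁻¹)_{jj} = 1/p²` for `j ≥ 2`, `(B̃⁻¹)_{j,j+1} = −q/p²`, and all other entries zero.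
Lean index `j : Fin W` corresponds to size `j+1`. -/
theorem stmt_8 (W : ℕ) (hW : 2 ≤ W)
    (p q : ℝ) (hp0 : 0 < p) (hp1 : p ≤ 1) (hq : q = 1 - p)
    (Bt : Matrix (Fin W) (Fin W) ℝ)
    (hBt : ∀ j k : Fin W, Bt j k =
      if (j : ℕ) = 0 then p * q ^ (k : ℕ)
      else if (j : ℕ) ≤ (k : ℕ) then p ^ 2 * q ^ ((k : ℕ) - (j : ℕ))
      else 0) :
    IsUnit Bt.det ∧
    ∀ j k : Fin W, Bt⁻¹ j k =
      if (k : ℕ) = (j : ℕ) then (if (j : ℕ) = 0 then p⁻¹ else (p ^ 2)⁻¹)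
      else if (k : ℕ) = (j : ℕ) + 1 then -q / p ^ 2
      else 0 :=
  stmt_8_general W p q hp0 Bt hBt
end

section
/- Fix W ≥ 1 and p ∈ (0,1], q = 1 − p. Let B̃ be the W×W upper-triangular matrix with entries B̃_{jk} = p·q^{k−j} for 1 ≤ j ≤ k ≤ W and B̃_{jk} = 0 for j > k (the Sample and Hold matrix). Then B̃ is invertible and its inverse is the upper-bidiagonal matrix with (B̃⁻¹)_{jj} = 1/p for 1 ≤ j ≤ W, (B̃⁻¹)_{j,j+1} = −q/p for 1 ≤ j ≤ W−1, and all other entries 0. -/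
/-!
Write `B̃ = p • G` with `G = ∑ₖ qᵏ Nᵏ`, where `N` is the nilpotent shift matrix (ones on the
superdiagonal). As a geometric series in `N`, `G` has left inverse `1 - q • N`, so
`B̃⁻¹ = p⁻¹ • (1 - q • N)`, which is the stated bidiagonal matrix.
-/

open Matrix

namespace Matrix

variable {R : Type*} {n : ℕ}

def geomUpper [Semiring R] (q : R) : Matrix (Fin n) (Fin n) R :=
  of fun j k => if (j : ℕ) ≤ k then q ^ ((k : ℕ) - j) else 0

def superdiag [Zero R] [One R] : Matrix (Fin n) (Fin n) R :=
  of fun j k => if (k : ℕ) = j + 1 then 1 else 0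

theorem superdiag_mul_apply [NonAssocSemiring R] (A : Matrix (Fin n) (Fin n) R) (j k : Fin n) :
    ((superdiag : Matrix (Fin n) (Fin n) R) * A) j k =
      if h : (j : ℕ) + 1 < n then A ⟨j + 1, h⟩ k else 0 := by
  simp only [mul_apply, superdiag, of_apply, ite_mul, one_mul, zero_mul]
  split_ifs with h
  · rw [Finset.sum_eq_single ⟨j + 1, h⟩] <;> simp +contextual [Fin.ext_iff]
  · exact Finset.sum_eq_zero fun l _ => if_neg fun hl => h (by omega)

theorem one_sub_smul_superdiag_mul_geomUpper [Ring R] (q : R) :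
    (1 - q • superdiag) * geomUpper q = (1 : Matrix (Fin n) (Fin n) R) := by
  ext j k
  rw [sub_mul, smul_mul_assoc, one_mul, sub_apply, smul_apply, superdiag_mul_apply, one_apply]
  simp only [geomUpper, of_apply, smul_eq_mul, Fin.ext_iff]
  split_ifs <;> first | omega | simp_all
  rw [show (k : ℕ) - j = k - (j + 1) + 1 by omega, pow_succ', sub_self]

end Matrix

theorem stmt_9_general (W : ℕ)
    (p q : ℝ) (hp0 : 0 < p)
    (Bt : Matrix (Fin W) (Fin W) ℝ)
    (hBt : ∀ j k : Fin W, Bt j k =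
      if (j : ℕ) ≤ (k : ℕ) then p * q ^ ((k : ℕ) - (j : ℕ)) else 0) :
    IsUnit Bt.det ∧
    ∀ j k : Fin W, Bt⁻¹ j k =
      if (k : ℕ) = (j : ℕ) then p⁻¹
      else if (k : ℕ) = (j : ℕ) + 1 then -q / p
      else 0 := by
  have hBt_eq : Bt = p • geomUpper q := by
    ext j k
    rw [hBt, Matrix.smul_apply, geomUpper, of_apply, smul_eq_mul, mul_ite, mul_zero]
  have hleft : (p⁻¹ • (1 - q • superdiag)) * Bt = 1 := by
    rw [hBt_eq, smul_mul_smul_comm, one_sub_smul_superdiag_mul_geomUpper,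
      inv_mul_cancel₀ hp0.ne', one_smul]
  refine ⟨isUnit_det_of_left_inverse hleft, fun j k => ?_⟩
  rw [inv_eq_left_inv hleft]
  simp only [Matrix.smul_apply, Matrix.sub_apply, one_apply, superdiag, of_apply, Fin.ext_iff,
    smul_eq_mul]
  split_ifs <;> first | omega | ring

/-- The Sample and Hold (SH) matrix `B̃` with entries
`B̃_{jk} = p q^{k−j}` for `1 ≤ j ≤ k ≤ W` (zero below the diagonal) is invertible;
its inverse is upper-bidiagonal with `(B̃⁻¹)_{jj} = 1/p`, `(B̃⁻¹)_{j,j+1} = −q/p`,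
and all other entries zero. Lean index `j : Fin W` corresponds to size `j+1`. -/
theorem stmt_9 (W : ℕ) (hW : 1 ≤ W)
    (p q : ℝ) (hp0 : 0 < p) (hp1 : p ≤ 1) (hq : q = 1 - p)
    (Bt : Matrix (Fin W) (Fin W) ℝ)
    (hBt : ∀ j k : Fin W, Bt j k =
      if (j : ℕ) ≤ (k : ℕ) then p * q ^ ((k : ℕ) - (j : ℕ)) else 0) :
    IsUnit Bt.det ∧
    ∀ j k : Fin W, Bt⁻¹ j k =
      if (k : ℕ) = (j : ℕ) then p⁻¹
      else if (k : ℕ) = (j : ℕ) + 1 then -q / p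
      else 0 :=
  stmt_9_general W p q hp0 Bt hBt
end

section
/- Fix W ≥ 1, a flow size distribution θ ∈ ℝ^W with θ_k > 0 for all k and Σ_{k=1}^W θ_k = 1, and p_f ∈ (0,1], q_f = 1 − p_f. The flow sampling Fisher information matrix J(θ) = q_f·𝟙_W 𝟙_Wᵀ + p_f·diag(1/θ₁,…,1/θ_W) is invertible with inverse J(θ)⁻¹ = (1/p_f)·diag(θ₁,…,θ_W) + (1 − 1/p_f)·θθᵀ. -/
open Matrix

/-! Multiply `J(θ)` against the claimed inverse and write `𝟙θᵀ := vecMulVec 1 θ`. Besides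
`diag θ⁻¹ · diag θ = 1`, every cross term is a multiple of `𝟙θᵀ`: `𝟙𝟙ᵀ · diag θ = 𝟙θᵀ`,
`𝟙𝟙ᵀ · θθᵀ = (∑ θ) 𝟙θᵀ = 𝟙θᵀ` and `diag θ⁻¹ · θθᵀ = 𝟙θᵀ`, and their coefficients add up to
`q_f + p_f - 1 = 0`. -/

namespace Matrix

variable {n : Type*} [Fintype n]

theorem vecMulVec_one_mul_vecMulVec {R : Type*} [CommSemiring R] (u θ v : n → R) :
    vecMulVec u 1 * vecMulVec θ v = (∑ k, θ k) • vecMulVec u v := by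
  rw [vecMulVec_mul_vecMulVec, one_dotProduct, vecMulVec_smul]

variable [DecidableEq n]

theorem vecMulVec_one_mul_diagonal {R : Type*} [Semiring R] (u θ : n → R) :
    vecMulVec u 1 * diagonal θ = vecMulVec u θ := by
  rw [vecMulVec_mul]
  congr 1
  ext k
  simp [vecMul_diagonal]

variable {K : Type*} [Field K]

theorem diagonal_inv_mul_diagonal {θ : n → K} (hθ : ∀ k, θ k ≠ 0) :
    diagonal θ⁻¹ * diagonal θ = 1 := by
  rw [diagonal_mul_diagonal, ← diagonal_one]
  exact congrArg diagonal (funext fun k => inv_mul_cancel₀ (hθ k))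

theorem diagonal_inv_mul_vecMulVec_self {θ : n → K} (hθ : ∀ k, θ k ≠ 0) (v : n → K) :
    diagonal θ⁻¹ * vecMulVec θ v = vecMulVec 1 v := by
  rw [mul_vecMulVec]
  congr 1
  ext k
  simp [mulVec_diagonal, inv_mul_cancel₀ (hθ k)]

theorem flowSampling_fisher_mul_inverse {θ : n → K} (hθ : ∀ k, θ k ≠ 0)
    (hsum : ∑ k, θ k = 1) {p : K} (hp : p ≠ 0) :
    ((1 - p) • vecMulVec 1 1 + p • diagonal θ⁻¹) *
      ((1 / p) • diagonal θ + (1 - 1 / p) • vecMulVec θ θ) = 1 := by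
  simp only [add_mul, mul_add, smul_mul_smul, vecMulVec_one_mul_diagonal,
    vecMulVec_one_mul_vecMulVec, hsum, one_smul, diagonal_inv_mul_diagonal hθ,
    diagonal_inv_mul_vecMulVec_self hθ]
  have hcoeff : (1 - p) * (1 / p) + (1 - p) * (1 - 1 / p) + p * (1 - 1 / p) = 0 := by
    field_simp
    ring
  rw [mul_one_div_cancel hp, one_smul]
  calc _ = ((1 - p) * (1 / p) + (1 - p) * (1 - 1 / p) + p * (1 - 1 / p)) • vecMulVec 1 θ + 1 :=
        by module
    _ = 1 := by rw [hcoeff, zero_smul, zero_add]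

end Matrix

theorem stmt_11_general (W : ℕ)
    (θ : Fin W → ℝ) (hθpos : ∀ k, 0 < θ k) (hθsum : ∑ k, θ k = 1)
    (pf qf : ℝ) (hpf0 : 0 < pf) (hqf : qf = 1 - pf)
    (J : Matrix (Fin W) (Fin W) ℝ)
    (hJ : J = qf • Matrix.vecMulVec (fun _ => (1 : ℝ)) (fun _ => (1 : ℝ)) +
      pf • Matrix.diagonal (fun k => (θ k)⁻¹)) :
    IsUnit J.det ∧
    J⁻¹ = (1 / pf) • Matrix.diagonal θ + (1 - 1 / pf) • Matrix.vecMulVec θ θ := by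
  have hJK : J * ((1 / pf) • diagonal θ + (1 - 1 / pf) • vecMulVec θ θ) = 1 := by
    subst hJ hqf
    exact flowSampling_fisher_mul_inverse (fun k => (hθpos k).ne') hθsum hpf0.ne'
  exact ⟨isUnit_det_of_right_inverse hJK, inv_eq_right_inv hJK⟩

/-- The flow sampling Fisher information matrix
`J(θ) = q_f·𝟙𝟙ᵀ + p_f·diag(1/θ₁,…,1/θ_W)` is invertible, with inverse
`J(θ)⁻¹ = (1/p_f)·diag(θ) + (1 − 1/p_f)·θθᵀ`. -/
theorem stmt_11 (W : ℕ) (hW : 1 ≤ W)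
    (θ : Fin W → ℝ) (hθpos : ∀ k, 0 < θ k) (hθsum : ∑ k, θ k = 1)
    (pf qf : ℝ) (hpf0 : 0 < pf) (hpf1 : pf ≤ 1) (hqf : qf = 1 - pf)
    (J : Matrix (Fin W) (Fin W) ℝ)
    (hJ : J = qf • Matrix.vecMulVec (fun _ => (1 : ℝ)) (fun _ => (1 : ℝ)) +
      pf • Matrix.diagonal (fun k => (θ k)⁻¹)) :
    IsUnit J.det ∧
    J⁻¹ = (1 / pf) • Matrix.diagonal θ + (1 - 1 / pf) • Matrix.vecMulVec θ θ :=
  stmt_11_general W θ hθpos hθsum pf qf hpf0 hqf J hJ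
end

section
/- Let B be a column-stochastic sampling matrix with B̃ invertible and d_j > 0 for all 0 ≤ j ≤ W, and write b'_{jk} = (B̃⁻¹)_{jk}. Then for every 1 ≤ j ≤ W the j-th diagonal element of J(θ)⁻¹ is (J(θ)⁻¹)_{jj} = Σ_{k=1}^W (b'_{jk})² d_k − ( Σ_{k=j}^W d_k b'_{jk} Σ_{ℓ=1}^k b_{0ℓ} b'_{ℓk} )² / ( d₀ + Σ_{k=1}^W d_k ( Σ_{ℓ=1}^k b_{0ℓ} b'_{ℓk} )² ). -/
/-!
Splitting off row `0` of `B` writes `J = B̃ᵀ D̃⁻¹ B̃ + d₀⁻¹ b₀ b₀ᵀ`, a rank-one perturbation of a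
matrix with the explicit inverse `B̃⁻¹ D̃ B̃⁻ᵀ`, so the Sherman–Morrison formula gives `J⁻¹`.
With `c = b₀ᵀ B̃⁻¹` its diagonal entries are `Σ_k (b'_{jk})² d_k − (Σ_k b'_{jk} d_k c_k)² /
(d₀ + Σ_k d_k c_k²)`, and since `B̃⁻¹` is upper triangular together with `B̃`, the sums over all
indices agree with the truncated sums of the statement.
-/

open Matrix

namespace Matrix

variable {n : Type*} [Fintype n]

section Diagonal

variable [DecidableEq n] {K : Type*} [Field K]

theorem inv_add_inv_smul_vecMulVec {A : Matrix n n K} (hA : IsUnit A.det) (u v : n → K) {s : K}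
    (hs : s ≠ 0) (hsq : s + v ⬝ᵥ A⁻¹ *ᵥ u ≠ 0) :
    (A + s⁻¹ • vecMulVec u v)⁻¹ =
      A⁻¹ - (s + v ⬝ᵥ A⁻¹ *ᵥ u)⁻¹ • vecMulVec (A⁻¹ *ᵥ u) (v ᵥ* A⁻¹) := by
  refine inv_eq_right_inv ?_
  set q := v ⬝ᵥ A⁻¹ *ᵥ u
  have hcoeff : s⁻¹ - (s + q)⁻¹ - s⁻¹ * ((s + q)⁻¹ * q) = 0 := by
    field_simp
    ring
  calc (A + s⁻¹ • vecMulVec u v) * (A⁻¹ - (s + q)⁻¹ • vecMulVec (A⁻¹ *ᵥ u) (v ᵥ* A⁻¹))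
      = 1 + (s⁻¹ - (s + q)⁻¹ - s⁻¹ * ((s + q)⁻¹ * q)) • vecMulVec u (v ᵥ* A⁻¹) := by
        rw [add_mul, mul_sub, mul_sub, mul_nonsing_inv A hA, Matrix.mul_smul, mul_vecMulVec,
          mulVec_mulVec, mul_nonsing_inv A hA, one_mulVec, Matrix.smul_mul, vecMulVec_mul,
          Matrix.smul_mul, Matrix.mul_smul, vecMulVec_mul_vecMulVec, vecMulVec_smul]
        module
    _ = 1 := by rw [hcoeff, zero_smul, add_zero]

theorem inv_transpose_mul_diagonal_inv_mul (P : Matrix n n K) {δ : n → K} (hδ : ∀ i, δ i ≠ 0) :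
    (Pᵀ * diagonal δ⁻¹ * P)⁻¹ = P⁻¹ * diagonal δ * P⁻¹ᵀ := by
  have hdiag : (diagonal δ⁻¹)⁻¹ = diagonal δ := by
    refine inv_eq_left_inv ?_
    rw [diagonal_mul_diagonal, ← diagonal_one]
    exact congrArg diagonal (funext fun i => mul_inv_cancel₀ (hδ i))
  rw [mul_inv_rev, mul_inv_rev, hdiag, transpose_nonsing_inv, Matrix.mul_assoc]

theorem isUnit_det_transpose_mul_diagonal_mul {P : Matrix n n K} (hP : IsUnit P.det)
    {δ : n → K} (hδ : ∀ i, δ i ≠ 0) : IsUnit (Pᵀ * diagonal δ * P).det := by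
  simp only [det_mul, det_transpose, det_diagonal, isUnit_iff_ne_zero] at hP ⊢
  exact mul_ne_zero (mul_ne_zero hP (Finset.prod_ne_zero_iff.2 fun i _ => hδ i)) hP

section Conjugate

variable {R : Type*} [CommSemiring R] (P : Matrix n n R) (δ : n → R)

theorem mul_diagonal_mul_transpose_apply_self (j : n) :
    (P * diagonal δ * Pᵀ) j j = ∑ k, P j k ^ 2 * δ k := by
  rw [mul_apply]
  simp only [mul_diagonal, transpose_apply]
  exact Finset.sum_congr rfl fun k _ => by ring

theorem mul_diagonal_mul_transpose_mulVec (v : n → R) :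
    (P * diagonal δ * Pᵀ) *ᵥ v = P *ᵥ (δ * (v ᵥ* P)) := by
  rw [← mulVec_mulVec, ← mulVec_mulVec, mulVec_transpose]
  congr 1
  ext k
  exact mulVec_diagonal _ _ k

theorem vecMul_mul_diagonal_mul_transpose (v : n → R) :
    v ᵥ* (P * diagonal δ * Pᵀ) = (P * diagonal δ * Pᵀ) *ᵥ v := by
  rw [← mulVec_transpose, transpose_mul, transpose_mul, transpose_transpose, diagonal_transpose,
    Matrix.mul_assoc]

theorem dotProduct_mul_diagonal_mul_transpose_mulVec (v : n → R) :
    v ⬝ᵥ (P * diagonal δ * Pᵀ) *ᵥ v = ∑ k, δ k * (v ᵥ* P) k ^ 2 := by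
  rw [mul_diagonal_mul_transpose_mulVec, dotProduct_mulVec]
  exact Finset.sum_congr rfl fun k _ => by simp only [Pi.mul_apply]; ring

end Conjugate

end Diagonal

theorem transpose_mul_diagonal_mul_eq_submatrix_succ_add {m R : Type*} [Fintype m]
    [CommSemiring R] {k : ℕ} (B : Matrix (Fin (k + 1)) m R) (w : Fin (k + 1) → R) :
    Bᵀ * diagonal w * B =
      (B.submatrix Fin.succ id)ᵀ * diagonal (fun i : Fin k => w i.succ) *
        B.submatrix Fin.succ id + w 0 • vecMulVec (B 0) (B 0) := by
  ext a b
  rw [add_apply, mul_apply, mul_apply, Fin.sum_univ_succ]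
  simp only [mul_diagonal, transpose_apply, submatrix_apply, id, smul_apply, vecMulVec_apply,
    smul_eq_mul]
  ring

section Triangular

variable [LinearOrder n] {R : Type*} [NonUnitalNonAssocSemiring R] {M : Matrix n n R}

theorem BlockTriangular.sum_filter_le_mul (hM : M.BlockTriangular id) (f : n → R) (k : n) :
    ∑ ℓ ∈ Finset.univ.filter (· ≤ k), f ℓ * M ℓ k = (f ᵥ* M) k := by
  rw [Finset.sum_filter_of_ne fun ℓ _ h => not_lt.1 fun hlt => h (by rw [hM hlt, mul_zero])]
  rfl

theorem BlockTriangular.sum_filter_ge_mul (hM : M.BlockTriangular id) (g : n → R) (j : n) :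
    ∑ k ∈ Finset.univ.filter (j ≤ ·), M j k * g k = (M *ᵥ g) j := by
  rw [Finset.sum_filter_of_ne fun k _ h => not_lt.1 fun hlt => h (by rw [hM hlt, zero_mul])]
  rfl

end Triangular

end Matrix

theorem stmt_12_general (W : ℕ)
    (B : Matrix (Fin (W + 1)) (Fin W) ℝ)
    (hBtri : ∀ (j : Fin (W + 1)) (k : Fin W), (k : ℕ) + 1 < (j : ℕ) → B j k = 0)
    (Bt : Matrix (Fin W) (Fin W) ℝ) (hBt : ∀ j k, Bt j k = B j.succ k)
    (hBtinv : IsUnit Bt.det)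
    (d : Fin (W + 1) → ℝ)
    (hdpos : ∀ j, 0 < d j)
    (J : Matrix (Fin W) (Fin W) ℝ)
    (hJ : J = Bᵀ * Matrix.diagonal (fun j => (d j)⁻¹) * B) :
    ∀ j : Fin W,
      J⁻¹ j j =
        (∑ k : Fin W, (Bt⁻¹ j k) ^ 2 * d k.succ) -
        (∑ k ∈ Finset.univ.filter (fun k : Fin W => j ≤ k),
            d k.succ * Bt⁻¹ j k *
              ∑ ℓ ∈ Finset.univ.filter (fun ℓ : Fin W => ℓ ≤ k), B 0 ℓ * Bt⁻¹ ℓ k) ^ 2 /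
        (d 0 + ∑ k : Fin W, d k.succ *
            (∑ ℓ ∈ Finset.univ.filter (fun ℓ : Fin W => ℓ ≤ k), B 0 ℓ * Bt⁻¹ ℓ k) ^ 2) := by
  intro j
  set δ : Fin W → ℝ := fun k => d k.succ
  have hδ : ∀ k, δ k ≠ 0 := fun k => (hdpos k.succ).ne'
  have hJ' : J = Btᵀ * diagonal δ⁻¹ * Bt + (d 0)⁻¹ • vecMulVec (B 0) (B 0) := by
    have hBt' : B.submatrix Fin.succ id = Bt := Matrix.ext fun i k => (hBt i k).symm
    rw [hJ, transpose_mul_diagonal_mul_eq_submatrix_succ_add, hBt']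
    rfl
  have hupper : Bt⁻¹.BlockTriangular id :=
    haveI := Bt.invertibleOfIsUnitDet hBtinv
    blockTriangular_inv_of_blockTriangular fun a b hab => by
      rw [hBt]
      exact hBtri a.succ b (by simpa using hab)
  have hquad : B 0 ⬝ᵥ (Btᵀ * diagonal δ⁻¹ * Bt)⁻¹ *ᵥ B 0 = ∑ k, δ k * (B 0 ᵥ* Bt⁻¹) k ^ 2 := by
    rw [inv_transpose_mul_diagonal_inv_mul Bt hδ, dotProduct_mul_diagonal_mul_transpose_mulVec]
  have hdenom : d 0 + ∑ k, δ k * (B 0 ᵥ* Bt⁻¹) k ^ 2 ≠ 0 :=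
    (add_pos_of_pos_of_nonneg (hdpos 0)
      (Finset.sum_nonneg fun k _ => mul_nonneg (hdpos k.succ).le (sq_nonneg _))).ne'
  have hnum : ∑ k ∈ Finset.univ.filter (j ≤ ·), δ k * Bt⁻¹ j k * (B 0 ᵥ* Bt⁻¹) k =
      (Bt⁻¹ *ᵥ (δ * (B 0 ᵥ* Bt⁻¹))) j := by
    rw [← hupper.sum_filter_ge_mul]
    exact Finset.sum_congr rfl fun k _ => by simp only [Pi.mul_apply]; ring
  rw [hJ', inv_add_inv_smul_vecMulVec
      (isUnit_det_transpose_mul_diagonal_mul (δ := δ⁻¹) hBtinv fun k => inv_ne_zero (hδ k)) _ _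
      (hdpos 0).ne' (hquad ▸ hdenom),
    hquad, inv_transpose_mul_diagonal_inv_mul Bt hδ, vecMul_mul_diagonal_mul_transpose,
    mul_diagonal_mul_transpose_mulVec, Matrix.sub_apply, Matrix.smul_apply, vecMulVec_apply,
    mul_diagonal_mul_transpose_apply_self]
  simp_rw [hupper.sum_filter_le_mul]
  rw [hnum, smul_eq_mul]
  ring

/-- For a column-stochastic sampling matrix `B` with invertible `B̃`
and positive `d`, writing `b'_{jk} = (B̃⁻¹)_{jk}`, every diagonal element of `J(θ)⁻¹`
satisfies
`(J⁻¹)_{jj} = Σ_{k=1}^W (b'_{jk})² d_k −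
 (Σ_{k=j}^W d_k b'_{jk} Σ_{ℓ=1}^k b_{0ℓ} b'_{ℓk})² /
 (d₀ + Σ_{k=1}^W d_k (Σ_{ℓ=1}^k b_{0ℓ} b'_{ℓk})²)`.
Lean column index `k : Fin W` corresponds to size `k+1`; `d k.succ` is `d_{k+1}`. -/
theorem stmt_12 (W : ℕ) (hW : 1 ≤ W)
    (θ : Fin W → ℝ) (hθpos : ∀ k, 0 < θ k) (hθsum : ∑ k, θ k = 1)
    (B : Matrix (Fin (W + 1)) (Fin W) ℝ)
    (hBnonneg : ∀ j k, 0 ≤ B j k)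
    (hBtri : ∀ (j : Fin (W + 1)) (k : Fin W), (k : ℕ) + 1 < (j : ℕ) → B j k = 0)
    (hBcol : ∀ k, ∑ j, B j k = 1)
    (Bt : Matrix (Fin W) (Fin W) ℝ) (hBt : ∀ j k, Bt j k = B j.succ k)
    (hBtinv : IsUnit Bt.det)
    (d : Fin (W + 1) → ℝ) (hd : d = B *ᵥ θ)
    (hdpos : ∀ j, 0 < d j)
    (J : Matrix (Fin W) (Fin W) ℝ)
    (hJ : J = Bᵀ * Matrix.diagonal (fun j => (d j)⁻¹) * B) :
    ∀ j : Fin W,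
      J⁻¹ j j =
        (∑ k : Fin W, (Bt⁻¹ j k) ^ 2 * d k.succ) -
        (∑ k ∈ Finset.univ.filter (fun k : Fin W => j ≤ k),
            d k.succ * Bt⁻¹ j k *
              ∑ ℓ ∈ Finset.univ.filter (fun ℓ : Fin W => ℓ ≤ k), B 0 ℓ * Bt⁻¹ ℓ k) ^ 2 /
        (d 0 + ∑ k : Fin W, d k.succ *
            (∑ ℓ ∈ Finset.univ.filter (fun ℓ : Fin W => ℓ ≤ k), B 0 ℓ * Bt⁻¹ ℓ k) ^ 2) :=
  stmt_12_general W B hBtri Bt hBt hBtinv d hdpos J hJ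
end

section
/- Fix W ≥ 3, a flow size distribution θ ∈ ℝ^W with θ_k > 0 and Σθ_k = 1, and p ∈ (0,1), q = 1 − p. Let B_Q be the (W+1)×W sampling matrix of PS+SEQ: row 0 entries q^k; b_{1k} = k p q^{k−1}; b_{jk} = (k−j+1) p² q^{k−j} for 2 ≤ j ≤ k ≤ W; zero otherwise. Let B_SQ be the (W+1)×W sampling matrix of PS+SYN+SEQ: row 0 entries q; b_{1k} = p q^{k−1}; b_{jk} = p² q^{k−j} for 2 ≤ j ≤ k ≤ W; zero otherwise. Let J_Q and J_SQ be the corresponding Fisher information matrices. Then for every 3 ≤ j ≤ W, (J_SQ⁻¹)_{jj} ≤ (J_Q⁻¹)_{jj}. -/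
/-!
Write `d = Bθ`, `D = diag d` and `J = Bᵀ D⁻¹ B`. By Gauss–Markov, `(J⁻¹)_{jj}` is the minimum of
`∑ dᵢ wᵢ²` over all `w` with `Bᵀ w = e_j`, and a feasible `w` attains it exactly when `D w` lies in
the range of `B`. Below row `1` both matrices are Toeplitz, with symbols `p² / (1 - qz)` for
`B_SQ` and `p² / (1 - qz)²` for `B_Q`. So `w_SQ = (e_j - q e_{j+1}) / p²` and
`w_Q = (e_j - 2q e_{j+1} + q² e_{j+2}) / p²` are feasible. `D_Q w_Q` is in the range of `B_Q`
because it is supported on rows `≥ 3` (this is where `j ≥ 3` enters): the second difference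
`(1 - qz)²` inverts the Toeplitz rows and annihilates rows `0` and `1`, which are `q^k` and
`k p q^(k-1)`. Finally `d^SQ_i ≤ d^Q_i` on rows `i ≥ 2` and `(w_SQ)_i² ≤ (w_Q)_i²`, hence
`(J_SQ⁻¹)_{jj} ≤ ∑ d^SQ w_SQ² ≤ ∑ d^Q w_Q² = (J_Q⁻¹)_{jj}`.
-/

open Matrix

/-- Fisher information `J(θ) = Bᵀ diag(1/d_j) B` with `d = Bθ`, for a sampling matrix
`B` whose rows are indexed by sampled size `j : Fin (W+1)` and whose columns are
indexed by `k : Fin W`, column `k` corresponding to original flow size `k+1`. -/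
noncomputable def fisherInfo {W : ℕ} (B : Matrix (Fin (W + 1)) (Fin W) ℝ)
    (θ : Fin W → ℝ) : Matrix (Fin W) (Fin W) ℝ :=
  Bᵀ * Matrix.diagonal (fun j => ((B *ᵥ θ) j)⁻¹) * B

/-- PS+SEQ sampling matrix: row `0` entries `q^k`; `b_{1k} = k p q^{k−1}`;
`b_{jk} = (k−j+1) p² q^{k−j}` for `2 ≤ j ≤ k ≤ W`; zero otherwise
(column `k : Fin W` corresponds to flow size `k+1`). -/
noncomputable def B_Q (W : ℕ) (p : ℝ) : Matrix (Fin (W + 1)) (Fin W) ℝ :=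
  fun j k =>
    if (j : ℕ) = 0 then (1 - p) ^ ((k : ℕ) + 1)
    else if (j : ℕ) = 1 then ((k : ℕ) + 1 : ℝ) * p * (1 - p) ^ (k : ℕ)
    else if (j : ℕ) ≤ (k : ℕ) + 1 then
      ((k : ℕ) + 1 - (j : ℕ) + 1 : ℕ) * p ^ 2 * (1 - p) ^ ((k : ℕ) + 1 - (j : ℕ))
    else 0

/-- PS+SYN+SEQ sampling matrix: row `0` entries `q`; `b_{1k} = p q^{k−1}`;
`b_{jk} = p² q^{k−j}` for `2 ≤ j ≤ k ≤ W`; zero otherwise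
(column `k : Fin W` corresponds to flow size `k+1`). -/
noncomputable def B_SQ (W : ℕ) (p : ℝ) : Matrix (Fin (W + 1)) (Fin W) ℝ :=
  fun j k =>
    if (j : ℕ) = 0 then 1 - p
    else if (j : ℕ) = 1 then p * (1 - p) ^ (k : ℕ)
    else if (j : ℕ) ≤ (k : ℕ) + 1 then p ^ 2 * (1 - p) ^ ((k : ℕ) + 1 - (j : ℕ))
    else 0

open Finset

section GaussMarkov

variable {m n : Type*} [Fintype m] [DecidableEq m] [Fintype n]
  {B : Matrix m n ℝ} {d : m → ℝ}

lemma transpose_mul_diagonal_inv_mul_mulVec (hd : ∀ i, d i ≠ 0) {w : m → ℝ} {x : n → ℝ}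
    (hx : B *ᵥ x = fun i => d i * w i) :
    (Bᵀ * diagonal (fun i => (d i)⁻¹) * B) *ᵥ x = Bᵀ *ᵥ w := by
  rw [← mulVec_mulVec, ← mulVec_mulVec, hx]
  congr 1
  funext i
  rw [mulVec_diagonal, inv_mul_cancel_left₀ (hd i)]

lemma posDef_transpose_mul_diagonal_inv_mul (hd : ∀ i, 0 < d i)
    (hB : Function.Injective B.mulVec) :
    (Bᵀ * diagonal (fun i => (d i)⁻¹) * B).PosDef := by
  simpa [conjTranspose_eq_transpose_of_trivial] using
    (PosDef.diagonal fun i => inv_pos.2 (hd i)).conjTranspose_mul_mul_same hB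

lemma inv_transpose_mul_diagonal_inv_mul_apply_self [DecidableEq n] (hd : ∀ i, d i ≠ 0)
    (hJ : IsUnit (Bᵀ * diagonal (fun i => (d i)⁻¹) * B).det) {w : m → ℝ} {x : n → ℝ} {j : n}
    (hw : Bᵀ *ᵥ w = Pi.single j 1) (hx : B *ᵥ x = fun i => d i * w i) :
    (Bᵀ * diagonal (fun i => (d i)⁻¹) * B)⁻¹ j j = ∑ i, d i * w i ^ 2 := by
  set J := Bᵀ * diagonal (fun i => (d i)⁻¹) * B
  have hJx : J⁻¹ *ᵥ Pi.single j 1 = x := by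
    rw [← hw, ← transpose_mul_diagonal_inv_mul_mulVec hd hx, mulVec_mulVec,
      nonsing_inv_mul _ hJ, one_mulVec]
  calc J⁻¹ j j = x j := by rw [← hJx, mulVec_single_one]; rfl
    _ = (Bᵀ *ᵥ w) ⬝ᵥ x := by rw [hw, single_one_dotProduct]
    _ = w ⬝ᵥ (B *ᵥ x) := by rw [dotProduct_mulVec, mulVec_transpose]
    _ = ∑ i, d i * w i ^ 2 := by rw [hx, dotProduct]; congr 1; ext i; ring

lemma inv_transpose_mul_diagonal_inv_mul_apply_self_le [DecidableEq n] (hd : ∀ i, 0 < d i)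
    (hJ : IsUnit (Bᵀ * diagonal (fun i => (d i)⁻¹) * B).det) {w : m → ℝ} {j : n}
    (hw : Bᵀ *ᵥ w = Pi.single j 1) :
    (Bᵀ * diagonal (fun i => (d i)⁻¹) * B)⁻¹ j j ≤ ∑ i, d i * w i ^ 2 := by
  set J := Bᵀ * diagonal (fun i => (d i)⁻¹) * B
  set x := J⁻¹ *ᵥ Pi.single j 1
  set u : m → ℝ := fun i => (d i)⁻¹ * (B *ᵥ x) i
  have hd' : ∀ i, d i ≠ 0 := fun i => (hd i).ne'
  have hx : B *ᵥ x = fun i => d i * u i := funext fun i => (mul_inv_cancel_left₀ (hd' i) _).symm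
  have hu : Bᵀ *ᵥ u = Pi.single j 1 := by
    rw [← transpose_mul_diagonal_inv_mul_mulVec hd' hx, mulVec_mulVec, mul_nonsing_inv _ hJ,
      one_mulVec]
  have horth : ∑ i, d i * u i * (w i - u i) = 0 :=
    calc ∑ i, d i * u i * (w i - u i) = (B *ᵥ x) ⬝ᵥ (w - u) := by rw [hx]; rfl
      _ = x ⬝ᵥ (Bᵀ *ᵥ (w - u)) := by rw [dotProduct_mulVec, vecMul_transpose]
      _ = 0 := by rw [mulVec_sub, hw, hu, sub_self, dotProduct_zero]
  rw [inv_transpose_mul_diagonal_inv_mul_apply_self hd' hJ hu hx, ← sub_nonneg]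
  calc 0 ≤ ∑ i, d i * (w i - u i) ^ 2 :=
        sum_nonneg fun i _ => mul_nonneg (hd i).le (sq_nonneg _)
    _ = ∑ i, (d i * w i ^ 2 - d i * u i ^ 2 - 2 * (d i * u i * (w i - u i))) :=
        sum_congr rfl fun i _ => by ring
    _ = ∑ i, d i * w i ^ 2 - ∑ i, d i * u i ^ 2 := by
        rw [sum_sub_distrib, sum_sub_distrib, ← mul_sum, horth, mul_zero, sub_zero]

end GaussMarkov

lemma mulVec_pos_of_nonneg {m n : Type*} [Fintype n] {B : Matrix m n ℝ} {θ : n → ℝ}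
    (hB : ∀ i k, 0 ≤ B i k) (hθ : ∀ k, 0 < θ k) (hrow : ∀ i, ∃ k, 0 < B i k) (i : m) :
    0 < (B *ᵥ θ) i :=
  have ⟨k, hk⟩ := hrow i
  sum_pos' (fun k _ => mul_nonneg (hB i k) (hθ k).le) ⟨k, mem_univ k, mul_pos hk (hθ k)⟩

lemma mulVec_injective_of_upperTriangular_succ {R : Type*} [CommRing R] [IsDomain R] {W : ℕ}
    {B : Matrix (Fin (W + 1)) (Fin W) R} (hB : ∀ i k, k < i → B i.succ k = 0)
    (hdiag : ∀ k, B k.succ k ≠ 0) : Function.Injective B.mulVec := by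
  have hdet : (B.submatrix Fin.succ id).det ≠ 0 := by
    rw [det_of_isUpperTriangular (M := B.submatrix Fin.succ id) fun i k hki => hB i k hki]
    exact prod_ne_zero_iff.2 fun k _ => hdiag k
  exact fun x y hxy => mulVec_injective_of_det_ne_zero hdet (funext fun i => congrFun hxy i.succ)

/-- The operator with symbol `(1 - q z)²`, the convolution inverse of `((m + 1) q ^ m)ₘ`. -/
def secondDiff (q : ℝ) (y : ℕ → ℝ) (n : ℕ) : ℝ :=
  y n - 2 * q * y (n + 1) + q ^ 2 * y (n + 2)

lemma sum_range_pow_mul_secondDiff (q : ℝ) (y : ℕ → ℝ) (i N : ℕ) :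
    ∑ m ∈ range N, q ^ m * secondDiff q y (i + m) =
      y i - q * y (i + 1) - q ^ N * (y (i + N) - q * y (i + N + 1)) := by
  induction N with
  | zero => simp
  | succ N ih =>
    rw [sum_range_succ, ih, secondDiff]
    ring_nf

lemma sum_range_succ_mul_pow_mul_secondDiff (q : ℝ) (y : ℕ → ℝ) (i N : ℕ) :
    ∑ m ∈ range N, (m + 1) * q ^ m * secondDiff q y (i + m) =
      y i - (N + 1) * q ^ N * y (i + N) + N * q ^ (N + 1) * y (i + N + 1) := by
  induction N with
  | zero => simp
  | succ N ih =>
    rw [sum_range_succ, ih, secondDiff]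
    push_cast
    ring_nf

noncomputable def bQ (p : ℝ) (n k : ℕ) : ℝ :=
  if n = 0 then (1 - p) ^ (k + 1)
  else if n = 1 then ((k : ℝ) + 1) * p * (1 - p) ^ k
  else if n ≤ k + 1 then ((k + 1 - n + 1 : ℕ) : ℝ) * p ^ 2 * (1 - p) ^ (k + 1 - n)
  else 0

noncomputable def bSQ (p : ℝ) (n k : ℕ) : ℝ :=
  if n = 0 then 1 - p
  else if n = 1 then p * (1 - p) ^ k
  else if n ≤ k + 1 then p ^ 2 * (1 - p) ^ (k + 1 - n)
  else 0

lemma B_Q_apply (W : ℕ) (p : ℝ) (i : Fin (W + 1)) (k : Fin W) : B_Q W p i k = bQ p i k := rfl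

lemma B_SQ_apply (W : ℕ) (p : ℝ) (i : Fin (W + 1)) (k : Fin W) : B_SQ W p i k = bSQ p i k := rfl

section Entries

variable {p : ℝ} {n k : ℕ}

lemma bQ_zero (k : ℕ) : bQ p 0 k = (1 - p) ^ (k + 1) := if_pos rfl

lemma bQ_succ_add (n m : ℕ) :
    bQ p (n + 1) (n + m) = (if n = 0 then p else p ^ 2) * (m + 1) * (1 - p) ^ m := by
  rcases n with _ | n
  · simp only [zero_add, bQ, one_ne_zero, if_false, if_true]
    ring
  · rw [bQ, if_neg (by omega), if_neg (by omega), if_pos (by omega), if_neg (by omega),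
      show n + 1 + m + 1 - (n + 1 + 1) = m by omega]
    push_cast; ring

lemma bQ_add_two (n m : ℕ) : bQ p (n + 2) (n + 1 + m) = (m + 1) * p ^ 2 * (1 - p) ^ m := by
  rw [bQ_succ_add, if_neg (by omega)]; ring

lemma bQ_eq_zero (hn : 2 ≤ n) (hk : k + 1 < n) : bQ p n k = 0 := by
  rw [bQ, if_neg (by omega), if_neg (by omega), if_neg (by omega)]

lemma bSQ_add_two (n m : ℕ) : bSQ p (n + 2) (n + 1 + m) = p ^ 2 * (1 - p) ^ m := by
  rw [bSQ, if_neg (by omega), if_neg (by omega), if_pos (by omega),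
    show n + 1 + m + 1 - (n + 2) = m by omega]

lemma bSQ_eq_zero (hn : 2 ≤ n) (hk : k + 1 < n) : bSQ p n k = 0 := by
  rw [bSQ, if_neg (by omega), if_neg (by omega), if_neg (by omega)]

lemma bQ_pos (hp0 : 0 < p) (hp1 : p < 1) (h : n ≤ k + 1) : 0 < bQ p n k := by
  have hq : 0 < 1 - p := by linarith
  unfold bQ
  split_ifs <;> positivity

lemma bSQ_pos (hp0 : 0 < p) (hp1 : p < 1) (h : n ≤ k + 1) : 0 < bSQ p n k := by
  have hq : 0 < 1 - p := by linarith
  unfold bSQ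
  split_ifs <;> positivity

lemma bQ_nonneg (hp0 : 0 < p) (hp1 : p < 1) (n k : ℕ) : 0 ≤ bQ p n k := by
  rcases le_or_gt n (k + 1) with h | h
  · exact (bQ_pos hp0 hp1 h).le
  · exact (bQ_eq_zero (by omega) h).ge

lemma bSQ_nonneg (hp0 : 0 < p) (hp1 : p < 1) (n k : ℕ) : 0 ≤ bSQ p n k := by
  rcases le_or_gt n (k + 1) with h | h
  · exact (bSQ_pos hp0 hp1 h).le
  · exact (bSQ_eq_zero (by omega) h).ge

lemma bSQ_le_bQ (hp1 : p < 1) (hn : 2 ≤ n) : bSQ p n k ≤ bQ p n k := by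
  rcases le_or_gt n (k + 1) with h | h
  · obtain ⟨n, m, rfl, rfl⟩ : ∃ n' m, n = n' + 2 ∧ k = n' + 1 + m :=
      ⟨n - 2, k + 1 - n, by omega, by omega⟩
    rw [bSQ_add_two, bQ_add_two]
    have hq : 0 ≤ 1 - p := by linarith
    nlinarith [mul_nonneg (mul_nonneg (Nat.cast_nonneg m : (0 : ℝ) ≤ m) (sq_nonneg p))
      (pow_nonneg hq m)]
  · rw [bSQ_eq_zero hn h, bQ_eq_zero hn h]

end Entries

lemma sum_fin_eq_sum_range_add {N : ℕ} (g : ℕ → ℝ) (hN : ∀ n, N ≤ n → g n = 0) (a L : ℕ)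
    (hs : ∀ n, g n ≠ 0 → a ≤ n ∧ n < a + L) :
    ∑ i : Fin N, g i = ∑ l ∈ range L, g (a + l) := by
  have hIco : ∑ l ∈ range L, g (a + l) = ∑ n ∈ Ico a (a + L), g n := by
    rw [sum_Ico_eq_sum_range, Nat.add_sub_cancel_left]
  rw [Fin.sum_univ_eq_sum_range g N, hIco]
  calc ∑ n ∈ range N, g n = ∑ n ∈ range N ∪ Ico a (a + L), g n :=
        sum_subset subset_union_left fun n _ hn => hN n (by simpa using hn)
    _ = ∑ n ∈ Ico a (a + L), g n :=
        (sum_subset subset_union_right fun n _ hn =>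
          not_not.1 fun h => hn (mem_Ico.2 (hs n h))).symm

noncomputable def wQ (p : ℝ) (j n : ℕ) : ℝ :=
  (if n = j + 1 then 1 else if n = j + 2 then -(2 * (1 - p))
    else if n = j + 3 then (1 - p) ^ 2 else 0) / p ^ 2

noncomputable def wSQ (p : ℝ) (j n : ℕ) : ℝ :=
  (if n = j + 1 then 1 else if n = j + 2 then -(1 - p) else 0) / p ^ 2

lemma sum_fin_mul_wQ {N : ℕ} (g : ℕ → ℝ) (hN : ∀ n, N ≤ n → g n = 0) (p : ℝ) (j : ℕ) :
    ∑ i : Fin N, g i * wQ p j i = secondDiff (1 - p) g (j + 1) / p ^ 2 := by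
  rw [sum_fin_eq_sum_range_add (fun n => g n * wQ p j n)
    (fun n hn => by rw [hN n hn, zero_mul]) (j + 1) 3]
  · simp only [wQ, Nat.add_eq_left, sum_range_succ, range_one, sum_singleton, add_zero,
      ↓reduceIte, one_div, one_ne_zero, Nat.add_right_cancel_iff,
      OfNat.ofNat_ne_zero, secondDiff]
    ring
  · intro n hn
    by_contra h
    exact hn (by rw [wQ, if_neg (by omega), if_neg (by omega), if_neg (by omega)]; simp)

lemma sum_fin_mul_wSQ {N : ℕ} (g : ℕ → ℝ) (hN : ∀ n, N ≤ n → g n = 0) (p : ℝ) (j : ℕ) :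
    ∑ i : Fin N, g i * wSQ p j i = (g (j + 1) - (1 - p) * g (j + 2)) / p ^ 2 := by
  rw [sum_fin_eq_sum_range_add (fun n => g n * wSQ p j n)
    (fun n hn => by rw [hN n hn, zero_mul]) (j + 1) 2]
  · simp only [wSQ, Nat.add_eq_left, neg_sub, sum_range_succ, range_one, sum_singleton, add_zero,
      ↓reduceIte, one_div, one_ne_zero]
    ring
  · intro n hn
    by_contra h
    exact hn (by rw [wSQ, if_neg (by omega), if_neg (by omega)]; simp)

section Transpose

variable {p : ℝ}

lemma secondDiff_bQ (i k : ℕ) :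
    secondDiff (1 - p) (fun n => bQ p n k) (i + 2) = if k = i + 1 then p ^ 2 else 0 := by
  simp only [secondDiff]
  rcases lt_or_ge k (i + 1) with hk | hk
  · rw [bQ_eq_zero (n := i + 2) (k := k) (by omega) (by omega),
      bQ_eq_zero (n := i + 2 + 1) (k := k) (by omega) (by omega),
      bQ_eq_zero (n := i + 2 + 2) (k := k) (by omega) (by omega), if_neg (by omega)]
    ring
  obtain ⟨m, rfl⟩ : ∃ m, k = i + 1 + m := ⟨k - (i + 1), by omega⟩
  rcases m with _ | _ | m
  · rw [bQ_add_two, bQ_eq_zero (n := i + 2 + 1) (k := i + 1 + 0) (by omega) (by omega),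
      bQ_eq_zero (n := i + 2 + 2) (k := i + 1 + 0) (by omega) (by omega), if_pos rfl]
    ring
  · have e2 := bQ_add_two (p := p) (i + 1) 0
    rw [bQ_add_two, bQ_eq_zero (n := i + 2 + 2) (k := i + 1 + (0 + 1)) (by omega) (by omega),
      if_neg (by omega)]
    ring_nf at e2 ⊢
    rw [e2]
    ring
  · have e1 := bQ_add_two (p := p) i (m + 2)
    have e2 := bQ_add_two (p := p) (i + 1) (m + 1)
    have e3 := bQ_add_two (p := p) (i + 2) m
    -- `ring_nf` puts the `ℕ` indices of `e1 e2 e3` and of the goal into the same normal form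
    ring_nf at e1 e2 e3 ⊢
    rw [e1, e2, e3, if_neg (by omega)]
    push_cast
    ring

lemma bSQ_sub_mul_bSQ (i k : ℕ) :
    bSQ p (i + 2) k - (1 - p) * bSQ p (i + 3) k = if k = i + 1 then p ^ 2 else 0 := by
  rcases lt_or_ge k (i + 1) with hk | hk
  · rw [bSQ_eq_zero (n := i + 2) (k := k) (by omega) (by omega),
      bSQ_eq_zero (n := i + 3) (k := k) (by omega) (by omega), if_neg (by omega)]
    ring
  obtain ⟨m, rfl⟩ : ∃ m, k = i + 1 + m := ⟨k - (i + 1), by omega⟩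
  rcases m with _ | m
  · rw [bSQ_add_two, bSQ_eq_zero (n := i + 3) (k := i + 1 + 0) (by omega) (by omega), if_pos rfl]
    ring
  · have e2 := bSQ_add_two (p := p) (i + 1) m
    rw [bSQ_add_two, if_neg (by omega)]
    ring_nf at e2 ⊢
    rw [e2]
    ring

lemma B_Q_transpose_mulVec_wQ (hp : p ≠ 0) {W : ℕ} (j : Fin W) (hj : 1 ≤ (j : ℕ)) :
    (B_Q W p)ᵀ *ᵥ (fun i => wQ p j i) = Pi.single j 1 := by
  funext k
  obtain ⟨i, hi⟩ : ∃ i, (j : ℕ) = i + 1 := ⟨j - 1, by omega⟩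
  simp only [mulVec, dotProduct, transpose_apply, B_Q_apply]
  rw [sum_fin_mul_wQ (fun n => bQ p n k) (fun n hn => bQ_eq_zero (by omega) (by omega)), hi,
    secondDiff_bQ, ← hi]
  simp only [Pi.single_apply, ← Fin.val_inj]
  split_ifs <;> simp [hp]

lemma B_SQ_transpose_mulVec_wSQ (hp : p ≠ 0) {W : ℕ} (j : Fin W) (hj : 1 ≤ (j : ℕ)) :
    (B_SQ W p)ᵀ *ᵥ (fun i => wSQ p j i) = Pi.single j 1 := by
  funext k
  obtain ⟨i, hi⟩ : ∃ i, (j : ℕ) = i + 1 := ⟨j - 1, by omega⟩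
  simp only [mulVec, dotProduct, transpose_apply, B_SQ_apply]
  rw [sum_fin_mul_wSQ (fun n => bSQ p n k) (fun n hn => bSQ_eq_zero (by omega) (by omega)), hi,
    bSQ_sub_mul_bSQ, ← hi]
  simp only [Pi.single_apply, ← Fin.val_inj]
  split_ifs <;> simp [hp]

end Transpose

section Toeplitz

variable {p : ℝ} {W : ℕ} {Y : ℕ → ℝ}

lemma sum_bQ_zero_mul_secondDiff (hY : Y (W + 1) = 0 ∧ Y (W + 2) = 0) :
    ∑ k ∈ range W, bQ p 0 k * secondDiff (1 - p) Y (k + 1) = (1 - p) * (Y 1 - (1 - p) * Y 2) := by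
  calc ∑ k ∈ range W, bQ p 0 k * secondDiff (1 - p) Y (k + 1)
      = (1 - p) * ∑ k ∈ range W, (1 - p) ^ k * secondDiff (1 - p) Y (1 + k) := by
        rw [mul_sum]
        exact sum_congr rfl fun k _ => by rw [bQ_zero, add_comm k 1]; ring
    _ = (1 - p) * (Y 1 - (1 - p) * Y 2) := by
        rw [sum_range_pow_mul_secondDiff, add_comm 1 W, hY.1, hY.2]
        ring

lemma sum_bQ_succ_mul_secondDiff (hY : Y (W + 1) = 0 ∧ Y (W + 2) = 0) {n : ℕ} (hn : n < W) :
    ∑ k ∈ range W, bQ p (n + 1) k * secondDiff (1 - p) Y (k + 1) =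
      (if n = 0 then p else p ^ 2) * Y (n + 1) := by
  have hlow : ∑ k ∈ range n, bQ p (n + 1) k * secondDiff (1 - p) Y (k + 1) = 0 :=
    sum_eq_zero fun k hk => by
      have := mem_range.1 hk
      rw [bQ_eq_zero (by omega) (by omega), zero_mul]
  rw [← sum_range_add_sum_Ico _ hn.le, hlow, zero_add, sum_Ico_eq_sum_range]
  calc ∑ m ∈ range (W - n), bQ p (n + 1) (n + m) * secondDiff (1 - p) Y (n + m + 1)
      = (if n = 0 then p else p ^ 2) *
          ∑ m ∈ range (W - n), (m + 1) * (1 - p) ^ m * secondDiff (1 - p) Y (n + 1 + m) := by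
        rw [mul_sum]
        exact sum_congr rfl fun m _ => by rw [bQ_succ_add, add_right_comm]; ring
    _ = (if n = 0 then p else p ^ 2) * Y (n + 1) := by
        rw [sum_range_succ_mul_pow_mul_secondDiff, show n + 1 + (W - n) = W + 1 by omega, hY.1,
          hY.2]
        ring

lemma B_Q_mulVec_secondDiff (hp : p ≠ 0) (hY : ∀ n, n < 3 ∨ W < n → Y n = 0) :
    B_Q W p *ᵥ (fun k => secondDiff (1 - p) Y (k + 1) / p ^ 2) = fun i : Fin (W + 1) => Y i := by
  have hYW : Y (W + 1) = 0 ∧ Y (W + 2) = 0 := ⟨hY _ (by omega), hY _ (by omega)⟩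
  funext ⟨i, hi⟩
  simp only [mulVec, dotProduct, B_Q_apply, mul_div_assoc', ← sum_div]
  rw [Fin.sum_univ_eq_sum_range (fun k => bQ p i k * secondDiff (1 - p) Y (k + 1)) W]
  rcases i with _ | n
  · rw [sum_bQ_zero_mul_secondDiff hYW, hY 0 (by omega), hY 1 (by omega), hY 2 (by omega)]
    simp
  · rw [sum_bQ_succ_mul_secondDiff hYW (by omega)]
    split_ifs with hn
    · rw [hn, hY 1 (by omega)]
      simp
    · field_simp

lemma exists_B_Q_mulVec_eq (hp : p ≠ 0) (y : Fin (W + 1) → ℝ)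
    (hy : ∀ i : Fin (W + 1), (i : ℕ) < 3 → y i = 0) :
    ∃ x, B_Q W p *ᵥ x = y := by
  set Y : ℕ → ℝ := fun n => if h : n < W + 1 then y ⟨n, h⟩ else 0
  have hY : ∀ n, n < 3 ∨ W < n → Y n = 0 := by
    intro n hn
    simp only [Y]
    split_ifs with h
    · exact hy ⟨n, h⟩ (show n < 3 by omega)
    · rfl
  exact ⟨_, (B_Q_mulVec_secondDiff hp hY).trans (funext fun i => dif_pos i.isLt)⟩

end Toeplitz

section Comparison

variable {p : ℝ} {W : ℕ} {θ : Fin W → ℝ}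

lemma B_Q_mulVec_pos (hp0 : 0 < p) (hp1 : p < 1) (hW : 0 < W) (hθ : ∀ k, 0 < θ k)
    (i : Fin (W + 1)) : 0 < (B_Q W p *ᵥ θ) i :=
  mulVec_pos_of_nonneg (B := B_Q W p) (fun _ _ => bQ_nonneg hp0 hp1 _ _) hθ
    (fun i' => ⟨⟨W - 1, by omega⟩, bQ_pos hp0 hp1 (show (i' : ℕ) ≤ W - 1 + 1 by omega)⟩) i

lemma B_SQ_mulVec_pos (hp0 : 0 < p) (hp1 : p < 1) (hW : 0 < W) (hθ : ∀ k, 0 < θ k)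
    (i : Fin (W + 1)) : 0 < (B_SQ W p *ᵥ θ) i :=
  mulVec_pos_of_nonneg (B := B_SQ W p) (fun _ _ => bSQ_nonneg hp0 hp1 _ _) hθ
    (fun i' => ⟨⟨W - 1, by omega⟩, bSQ_pos hp0 hp1 (show (i' : ℕ) ≤ W - 1 + 1 by omega)⟩) i

lemma B_Q_mulVec_injective (hp0 : 0 < p) (hp1 : p < 1) : Function.Injective (B_Q W p).mulVec :=
  mulVec_injective_of_upperTriangular_succ
    (fun i k hki => bQ_eq_zero (by rw [Fin.val_succ]; omega) (by rw [Fin.val_succ]; omega))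
    (fun k => (bQ_pos hp0 hp1 (Fin.val_succ k).le).ne')

lemma B_SQ_mulVec_injective (hp0 : 0 < p) (hp1 : p < 1) :
    Function.Injective (B_SQ W p).mulVec :=
  mulVec_injective_of_upperTriangular_succ
    (fun i k hki => bSQ_eq_zero (by rw [Fin.val_succ]; omega) (by rw [Fin.val_succ]; omega))
    (fun k => (bSQ_pos hp0 hp1 (Fin.val_succ k).le).ne')

lemma wQ_eq_zero {j n : ℕ} (h : n < j + 1) : wQ p j n = 0 := by
  rw [wQ, if_neg (by omega), if_neg (by omega), if_neg (by omega), zero_div]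

lemma wSQ_eq_zero {j n : ℕ} (h : n < j + 1) : wSQ p j n = 0 := by
  rw [wSQ, if_neg (by omega), if_neg (by omega), zero_div]

lemma wSQ_sq_le_wQ_sq (j n : ℕ) : wSQ p j n ^ 2 ≤ wQ p j n ^ 2 := by
  rw [wSQ, wQ, div_pow, div_pow]
  gcongr ?_ / _
  split_ifs <;> nlinarith [sq_nonneg (1 - p), sq_nonneg ((1 - p) ^ 2)]

lemma B_SQ_mulVec_le_B_Q_mulVec (hp1 : p < 1) (hθ : ∀ k, 0 ≤ θ k) (i : Fin (W + 1))
    (hi : 2 ≤ (i : ℕ)) : (B_SQ W p *ᵥ θ) i ≤ (B_Q W p *ᵥ θ) i :=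
  show ∑ k : Fin W, bSQ p i k * θ k ≤ ∑ k : Fin W, bQ p i k * θ k from
    sum_le_sum fun k _ => mul_le_mul_of_nonneg_right (bSQ_le_bQ hp1 hi) (hθ k)

lemma B_SQ_mulVec_mul_wSQ_sq_le (hp1 : p < 1) (hθ : ∀ k, 0 ≤ θ k)
    (hd : ∀ i, 0 ≤ (B_Q W p *ᵥ θ) i) (j : ℕ) (hj : 1 ≤ j) (i : Fin (W + 1)) :
    (B_SQ W p *ᵥ θ) i * wSQ p j i ^ 2 ≤ (B_Q W p *ᵥ θ) i * wQ p j i ^ 2 := by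
  rcases lt_or_ge (i : ℕ) 2 with hi | hi
  · rw [wSQ_eq_zero (by omega), sq, mul_zero, mul_zero]
    exact mul_nonneg (hd i) (sq_nonneg _)
  · exact mul_le_mul (B_SQ_mulVec_le_B_Q_mulVec hp1 hθ i hi) (wSQ_sq_le_wQ_sq j i) (sq_nonneg _)
      (hd i)

end Comparison

/-- Lean index `j : Fin W` corresponds to flow size `j + 1`, so `3 ≤ j ≤ W` reads
`2 ≤ (j : ℕ)`. -/
theorem stmt_15_general (W : ℕ)
    (θ : Fin W → ℝ) (hθpos : ∀ k, 0 < θ k)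
    (p : ℝ) (hp0 : 0 < p) (hp1 : p < 1) :
    ∀ j : Fin W, 2 ≤ (j : ℕ) →
      (fisherInfo (B_SQ W p) θ)⁻¹ j j ≤ (fisherInfo (B_Q W p) θ)⁻¹ j j := by
  intro j hj
  have hdQ := B_Q_mulVec_pos hp0 hp1 j.pos hθpos
  have hdSQ := B_SQ_mulVec_pos hp0 hp1 j.pos hθpos
  have hJQ : IsUnit (fisherInfo (B_Q W p) θ).det :=
    (posDef_transpose_mul_diagonal_inv_mul hdQ (B_Q_mulVec_injective hp0 hp1)).det_pos.ne'.isUnit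
  have hJSQ : IsUnit (fisherInfo (B_SQ W p) θ).det :=
    (posDef_transpose_mul_diagonal_inv_mul hdSQ (B_SQ_mulVec_injective hp0 hp1)).det_pos.ne'.isUnit
  obtain ⟨x, hx⟩ := exists_B_Q_mulVec_eq hp0.ne' (fun i => (B_Q W p *ᵥ θ) i * wQ p j i)
    fun i hi => by rw [wQ_eq_zero (by omega), mul_zero]
  calc (fisherInfo (B_SQ W p) θ)⁻¹ j j ≤ ∑ i, (B_SQ W p *ᵥ θ) i * wSQ p j i ^ 2 :=
        inv_transpose_mul_diagonal_inv_mul_apply_self_le hdSQ hJSQ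
          (B_SQ_transpose_mulVec_wSQ hp0.ne' j (by omega))
    _ ≤ ∑ i, (B_Q W p *ᵥ θ) i * wQ p j i ^ 2 :=
        sum_le_sum fun i _ => B_SQ_mulVec_mul_wSQ_sq_le hp1 (fun k => (hθpos k).le)
          (fun i => (hdQ i).le) j (by omega) i
    _ = (fisherInfo (B_Q W p) θ)⁻¹ j j :=
        (inv_transpose_mul_diagonal_inv_mul_apply_self (fun i => (hdQ i).ne') hJQ
          (B_Q_transpose_mulVec_wQ hp0.ne' j (by omega)) hx).symm

/-- For every flow size `j` with `3 ≤ j ≤ W` (equal PPR parameter `p`),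
the PS+SYN+SEQ CRLB diagonal is at most the PS+SEQ one:
`(J_SQ⁻¹)_{jj} ≤ (J_Q⁻¹)_{jj}`. Lean index `j : Fin W` corresponds to size `j+1`,
so the range `3 ≤ j ≤ W` is `2 ≤ (j : ℕ)`. -/
theorem stmt_15 (W : ℕ) (hW : 3 ≤ W)
    (θ : Fin W → ℝ) (hθpos : ∀ k, 0 < θ k) (hθsum : ∑ k, θ k = 1)
    (p : ℝ) (hp0 : 0 < p) (hp1 : p < 1) :
    ∀ j : Fin W, 2 ≤ (j : ℕ) →
      (fisherInfo (B_SQ W p) θ)⁻¹ j j ≤ (fisherInfo (B_Q W p) θ)⁻¹ j j :=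
  stmt_15_general W θ hθpos p hp0 hp1
end

section
/- Fix W ≥ 2, a flow size distribution θ ∈ ℝ^W with θ_k > 0 and Σθ_k = 1, and parameters 0 < p_p ≤ p < 1. Let J_FS(p) be the flow sampling Fisher information (from the sampling matrix with row 0 entries 1−p and B̃ = p·I_W) and let J_SH(p_p) be the Sample and Hold Fisher information (from the sampling matrix with row 0 entries (1−p_p)^k and b_{jk} = p_p (1−p_p)^{k−j} for 1 ≤ j ≤ k ≤ W). Then: (a) for every 2 ≤ j ≤ W, (J_FS(p)⁻¹)_{jj} ≤ (J_SH(p_p)⁻¹)_{jj}; (b) if W = 2, or if W > 2 and θ₂ ≥ θ₁(1−θ₁), then also (J_FS(p)⁻¹)_{11} ≤ (J_SH(p_p)⁻¹)_{11}; (c) for any θ there exists p₀ ∈ (0,1) such that (J_FS(p)⁻¹)_{11} ≤ (J_SH(p_p)⁻¹)_{11} whenever 0 < p_p ≤ p ≤ p₀. -/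
open Matrix

/-- Flow sampling (FS) matrix with parameter `p`: row `0` entries `1 − p`,
`b_{jk} = p` iff `j = k`, zero otherwise (column `k : Fin W` is flow size `k+1`). -/
noncomputable def B_FS (W : ℕ) (p : ℝ) : Matrix (Fin (W + 1)) (Fin W) ℝ :=
  fun j k =>
    if (j : ℕ) = 0 then 1 - p
    else if (j : ℕ) = (k : ℕ) + 1 then p
    else 0

/-- Sample and Hold (SH) matrix with parameter `p`: row `0` entries `(1−p)^k`,
`b_{jk} = p (1−p)^{k−j}` for `1 ≤ j ≤ k ≤ W`, zero otherwise
(column `k : Fin W` is flow size `k+1`). -/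
noncomputable def B_SH (W : ℕ) (p : ℝ) : Matrix (Fin (W + 1)) (Fin W) ℝ :=
  fun j k =>
    if (j : ℕ) = 0 then (1 - p) ^ ((k : ℕ) + 1)
    else if (j : ℕ) ≤ (k : ℕ) + 1 then p * (1 - p) ^ ((k : ℕ) + 1 - (j : ℕ))
    else 0

/-!
Write `d = Bθ`, `T` for `B` without its row `0`, and `b = B 0`. Then
`J = Tᵀ diag(d₁, …, d_W)⁻¹ T + d₀⁻¹ b bᵀ`, so if `L T = 1` then `J⁻¹` is `N = L diag(d₁, …, d_W) Lᵀ`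
corrected by Sherman–Morrison. For flow sampling `T = p • 1`, which gives
`(J_FS⁻¹)_{jj} = θ_j (1 - (1 - p) θ_j) / p ≤ θ_j / p`. For sample and hold `T` is upper triangular
Toeplitz with bidiagonal inverse and `b` is a multiple of the first row of `T`, so the correction
only touches the entry `(0, 0)`: for `j ≠ 0`, `(J_SH⁻¹)_{jj} = N_{jj} ≥ d_{j+1} / q² ≥ θ_j / q`,
and `(J_SH⁻¹)_{00} = θ₀ + (1 - q) d₂ / q²`. Since `(1 - p) / p ≤ (1 - q) / q`, the comparison at
`(0, 0)` reduces to `q θ₀ (1 - θ₀) ≤ d₂`, and `d₂` is at least `q θ₁` and at least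
`q (1 - q) ^ (W - 2) (1 - θ₀)`.
-/

theorem exists_le_one_sub_pow {x : ℝ} (hx0 : 0 < x) (hx1 : x < 1) (V : ℕ) :
    ∃ p₀ ∈ Set.Ioo (0 : ℝ) 1, ∀ q ≤ p₀, x ≤ (1 - q) ^ V := by
  set c := x ^ ((V + 1 : ℕ)⁻¹ : ℝ)
  have hc0 : 0 < c := Real.rpow_pos_of_pos hx0 _
  have hc1 : c < 1 := Real.rpow_lt_one hx0.le hx1 (by positivity)
  have hcx : c ^ (V + 1) = x := Real.rpow_inv_natCast_pow hx0.le (Nat.succ_ne_zero V)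
  refine ⟨1 - c, ⟨by linarith, by linarith⟩, fun q hq => ?_⟩
  calc x = c ^ (V + 1) := hcx.symm
    _ ≤ c ^ V := pow_le_pow_of_le_one hc0.le hc1.le (Nat.le_succ V)
    _ ≤ (1 - q) ^ V := pow_le_pow_left₀ hc0.le (by linarith) V

namespace Matrix

variable {n K : Type*} [Fintype n] [DecidableEq n] [Field K]

/-- Sherman–Morrison formula. -/
theorem inv_add_smul_vecMulVec_self_s17 {M N : Matrix n n K} (hMN : M * N = 1) (hN : N.IsSymm)
    {c : K} (hc : c ≠ 0) (b : n → K) (hden : c + b ⬝ᵥ (N *ᵥ b) ≠ 0) :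
    (M + c⁻¹ • vecMulVec b b)⁻¹ =
      N - (c + b ⬝ᵥ (N *ᵥ b))⁻¹ • vecMulVec (N *ᵥ b) (N *ᵥ b) := by
  set k := (c + b ⬝ᵥ (N *ᵥ b))⁻¹
  have hk : c⁻¹ - k - c⁻¹ * k * (b ⬝ᵥ (N *ᵥ b)) = 0 := by
    simp only [k]; field_simp; ring
  have hbN : b ᵥ* N = N *ᵥ b := by rw [← mulVec_transpose, hN.eq]
  apply inv_eq_right_inv
  rw [add_mul, mul_sub, mul_sub, hMN, mul_smul_comm, mul_vecMulVec, mulVec_mulVec, hMN,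
    one_mulVec, smul_mul_assoc, vecMulVec_mul, hbN, smul_mul_assoc, mul_smul_comm,
    vecMulVec_mul_vecMulVec, vecMulVec_smul, smul_smul]
  calc 1 - k • vecMulVec b (N *ᵥ b) + (c⁻¹ • vecMulVec b (N *ᵥ b)
        - (c⁻¹ * k) • (b ⬝ᵥ N *ᵥ b) • vecMulVec b (N *ᵥ b))
      = 1 + (c⁻¹ - k - c⁻¹ * k * (b ⬝ᵥ (N *ᵥ b))) • vecMulVec b (N *ᵥ b) := by module
    _ = 1 := by rw [hk, zero_smul, add_zero]

theorem transpose_mul_diagonal_mul_mul_eq_one {T L : Matrix n n K} (hLT : L * T = 1)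
    {f : n → K} (hf : ∀ i, f i ≠ 0) :
    Tᵀ * diagonal f⁻¹ * T * (L * diagonal f * Lᵀ) = 1 := by
  calc Tᵀ * diagonal f⁻¹ * T * (L * diagonal f * Lᵀ)
      = Tᵀ * (diagonal f⁻¹ * (T * L) * diagonal f) * Lᵀ := by simp only [Matrix.mul_assoc]
    _ = (L * T)ᵀ := by
      rw [mul_eq_one_comm.mp hLT, Matrix.mul_one, diagonal_mul_diagonal, transpose_mul]
      simp [hf]
    _ = 1 := by rw [hLT, transpose_one]

theorem mul_diagonal_mul_transpose_apply_self_s17 {R : Type*} [CommSemiring R] (L : Matrix n n R)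
    (f : n → R) (j : n) : (L * diagonal f * Lᵀ) j j = ∑ m, L j m ^ 2 * f m := by
  rw [mul_apply]
  simp only [mul_diagonal, transpose_apply]
  exact Finset.sum_congr rfl fun m _ => by ring

end Matrix

section FisherInfo

variable {W : ℕ}

theorem fisherInfo_eq_add_smul_vecMulVec (B : Matrix (Fin (W + 1)) (Fin W) ℝ) (θ : Fin W → ℝ) :
    fisherInfo B θ =
      (B.submatrix Fin.succ id)ᵀ * diagonal (fun i => (B *ᵥ θ) i.succ)⁻¹ *
          B.submatrix Fin.succ id + ((B *ᵥ θ) 0)⁻¹ • vecMulVec (B 0) (B 0) := by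
  ext k k'
  simp only [fisherInfo, mul_apply, transpose_apply, diagonal_apply, mul_ite, mul_zero,
    Finset.sum_ite_eq', Finset.mem_univ, ↓reduceIte, Fin.sum_univ_succ, transpose_submatrix,
    Matrix.add_apply, submatrix_apply, id_eq, Pi.inv_apply, Matrix.smul_apply, vecMulVec_apply,
    smul_eq_mul]
  ring

theorem inv_fisherInfo_apply_self {B : Matrix (Fin (W + 1)) (Fin W) ℝ} {θ : Fin W → ℝ}
    {L N : Matrix (Fin W) (Fin W) ℝ}
    (hLT : L * B.submatrix Fin.succ id = 1) (hd : ∀ i : Fin W, (B *ᵥ θ) i.succ ≠ 0)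
    (hN : N = L * diagonal (fun i => (B *ᵥ θ) i.succ) * Lᵀ) (hd0 : (B *ᵥ θ) 0 ≠ 0)
    (hden : (B *ᵥ θ) 0 + B 0 ⬝ᵥ (N *ᵥ B 0) ≠ 0) (j : Fin W) :
    (fisherInfo B θ)⁻¹ j j =
      N j j - ((B *ᵥ θ) 0 + B 0 ⬝ᵥ (N *ᵥ B 0))⁻¹ * (N *ᵥ B 0) j ^ 2 := by
  have hN_symm : N.IsSymm := by
    rw [hN, IsSymm, transpose_mul, transpose_mul, transpose_transpose, diagonal_transpose,
      Matrix.mul_assoc]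
  have hMN := hN ▸ transpose_mul_diagonal_mul_mul_eq_one hLT hd
  rw [fisherInfo_eq_add_smul_vecMulVec, inv_add_smul_vecMulVec_self_s17 hMN hN_symm hd0 _ hden]
  simp only [Matrix.sub_apply, Matrix.smul_apply, vecMulVec_apply, smul_eq_mul]
  ring

end FisherInfo

section FlowSampling

variable {W : ℕ} {p : ℝ} {θ : Fin W → ℝ}

theorem B_FS_zero : B_FS W p 0 = fun _ => 1 - p := by
  ext k; simp [B_FS]

theorem B_FS_submatrix_succ : (B_FS W p).submatrix Fin.succ id = diagonal fun _ => p := by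
  ext i k; simp [B_FS, diagonal_apply, Fin.val_eq_val]

theorem B_FS_mulVec_zero (hθsum : ∑ k, θ k = 1) : (B_FS W p *ᵥ θ) 0 = 1 - p := by
  simp [B_FS_zero, mulVec, dotProduct, ← Finset.mul_sum, hθsum]

theorem B_FS_mulVec_succ (i : Fin W) : (B_FS W p *ᵥ θ) i.succ = p * θ i := by
  change ((B_FS W p).submatrix Fin.succ id *ᵥ θ) i = _
  rw [B_FS_submatrix_succ, mulVec_diagonal]

theorem inv_fisherInfo_B_FS_apply_self (hp0 : 0 < p) (hp1 : p < 1) (hθ : ∀ k, 0 < θ k)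
    (hθsum : ∑ k, θ k = 1) (j : Fin W) :
    (fisherInfo (B_FS W p) θ)⁻¹ j j = θ j * (1 - (1 - p) * θ j) / p := by
  have hp : p ≠ 0 := hp0.ne'
  have h1p : 0 < 1 - p := by linarith
  have hv : (diagonal fun k => θ k / p) *ᵥ B_FS W p 0 = fun k => (1 - p) * θ k / p := by
    ext k; rw [mulVec_diagonal, B_FS_zero]; ring
  have hβ : B_FS W p 0 ⬝ᵥ (fun k => (1 - p) * θ k / p) = (1 - p) ^ 2 / p := by
    simp only [B_FS_zero, dotProduct]
    rw [show (1 - p) ^ 2 / p = (1 - p) ^ 2 / p * ∑ k, θ k by rw [hθsum, mul_one],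
      Finset.mul_sum]
    exact Finset.sum_congr rfl fun k _ => by ring
  rw [inv_fisherInfo_apply_self (L := diagonal fun _ => p⁻¹) (N := diagonal fun k => θ k / p),
    hv, hβ, B_FS_mulVec_zero hθsum, diagonal_apply_eq]
  · field_simp
    ring
  · rw [B_FS_submatrix_succ, diagonal_mul_diagonal]
    simp [hp]
  · intro i; rw [B_FS_mulVec_succ]; exact mul_ne_zero hp (hθ i).ne'
  · simp only [B_FS_mulVec_succ, diagonal_transpose, diagonal_mul_diagonal]
    congr 1; ext k; field_simp
  · rw [B_FS_mulVec_zero hθsum]; exact h1p.ne'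
  · rw [hv, hβ, B_FS_mulVec_zero hθsum]
    positivity

end FlowSampling

section SampleAndHold

variable {W : ℕ} {q : ℝ} {θ : Fin W → ℝ}

/-- `q⁻¹ (1 - (1 - q) S)` with `S` the superdiagonal shift; it inverts the upper triangular
Toeplitz matrix `(B_SH W q).submatrix Fin.succ id`. -/
noncomputable def B_SH_succInv (W : ℕ) (q : ℝ) : Matrix (Fin W) (Fin W) ℝ :=
  fun i m => q⁻¹ * ((if m = i then 1 else 0) - (1 - q) * if (m : ℕ) = i + 1 then 1 else 0)

theorem B_SH_submatrix_succ_apply (i m : Fin W) :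
    (B_SH W q).submatrix Fin.succ id i m =
      if (i : ℕ) ≤ m then q * (1 - q) ^ ((m : ℕ) - i) else 0 := by
  simp [B_SH, Nat.add_sub_add_right]

theorem B_SH_submatrix_succ_mul_succInv (hq : q ≠ 0) :
    (B_SH W q).submatrix Fin.succ id * B_SH_succInv W q = 1 := by
  ext k m
  set g : ℕ → ℝ := fun n => if (k : ℕ) ≤ n then q * (1 - q) ^ (n - k) else 0
  have hT (i : Fin W) : (B_SH W q).submatrix Fin.succ id k i = g i :=
    B_SH_submatrix_succ_apply k i
  have hsplit (i : Fin W) : g i * B_SH_succInv W q i m =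
      q⁻¹ * (if m = i then g i else 0) - q⁻¹ * (1 - q) * (if (m : ℕ) = i + 1 then g i else 0) := by
    simp only [B_SH_succInv]; split_ifs <;> ring
  rw [mul_apply]
  simp only [hT, hsplit]
  rw [Finset.sum_sub_distrib, ← Finset.mul_sum, ← Finset.mul_sum, Finset.sum_ite_eq]
  simp only [Finset.mem_univ, if_true, one_apply, Fin.ext_iff]
  obtain hm | ⟨t, ht⟩ : (m : ℕ) = 0 ∨ ∃ t, (m : ℕ) = t + 1 :=
    (m : ℕ).eq_zero_or_eq_succ_pred.imp id fun h => ⟨_, h⟩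
  · have hk : (k : ℕ) ≤ 0 ↔ (k : ℕ) = 0 := Nat.le_zero
    simp [g, hm, hk, hq]
  · have htW : t < W := by have := m.isLt; omega
    rw [Finset.sum_eq_single ⟨t, htW⟩ (fun i _ hi => if_neg fun h => hi (Fin.ext (by simp; omega)))
      (by simp), if_pos ht]
    simp only [g, ht]
    rcases lt_trichotomy (k : ℕ) (t + 1) with hlt | heq | hgt
    · rw [if_pos hlt.le, if_pos (by omega), if_neg hlt.ne, Nat.sub_add_comm (by omega), pow_succ]
      field_simp; ring
    · rw [if_pos heq.le, if_neg (by omega), if_pos heq, heq, Nat.sub_self]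
      field_simp; ring
    · rw [if_neg (by omega), if_neg (by omega), if_neg hgt.ne']
      ring

theorem B_SH_succInv_mul_submatrix_succ (hq : q ≠ 0) :
    B_SH_succInv W q * (B_SH W q).submatrix Fin.succ id = 1 :=
  mul_eq_one_comm.mp (B_SH_submatrix_succ_mul_succInv hq)

theorem B_SH_nonneg (hq0 : 0 ≤ q) (hq1 : q ≤ 1) (j : Fin (W + 1)) (k : Fin W) :
    0 ≤ B_SH W q j k := by
  have : 0 ≤ 1 - q := by linarith
  unfold B_SH; split_ifs <;> positivity

theorem mul_le_B_SH_mulVec_succ (hq0 : 0 ≤ q) (hq1 : q ≤ 1) (hθ : ∀ k, 0 ≤ θ k) (j : Fin W) :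
    q * θ j ≤ (B_SH W q *ᵥ θ) j.succ := by
  have hjj : B_SH W q j.succ j = q := by simp [B_SH]
  calc q * θ j = B_SH W q j.succ j * θ j := by rw [hjj]
    _ ≤ ∑ k, B_SH W q j.succ k * θ k :=
      Finset.single_le_sum (f := fun k => B_SH W q j.succ k * θ k)
        (fun k _ => mul_nonneg (B_SH_nonneg hq0 hq1 _ _) (hθ k)) (Finset.mem_univ j)

variable [NeZero W]

theorem B_SH_zero_eq_transpose_mulVec (hq : q ≠ 0) :
    B_SH W q 0 = ((B_SH W q).submatrix Fin.succ id)ᵀ *ᵥ Pi.single 0 ((1 - q) / q) := by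
  ext k
  rw [mulVec_transpose, single_vecMul, Pi.smul_apply, row_apply, B_SH_submatrix_succ_apply]
  simp only [B_SH, Fin.coe_ofNat_eq_mod, Nat.zero_mod, ↓reduceIte, zero_le, tsub_zero,
    smul_eq_mul]
  field_simp
  ring

theorem B_SH_succInv_mulVec_single_zero (a : ℝ) :
    B_SH_succInv W q *ᵥ Pi.single 0 a = Pi.single 0 (a / q) := by
  ext i
  rw [mulVec_single]
  simp [B_SH_succInv, Pi.single_apply, div_eq_inv_mul, eq_comm (a := (0 : Fin W))]

theorem B_SH_succInv_zero_zero : B_SH_succInv W q 0 0 = q⁻¹ := by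
  simp [B_SH_succInv]

theorem B_SH_mulVec_zero (hq : q ≠ 0) :
    (B_SH W q *ᵥ θ) 0 = (1 - q) / q * (B_SH W q *ᵥ θ) 1 := by
  change B_SH W q 0 ⬝ᵥ θ = _
  rw [B_SH_zero_eq_transpose_mulVec hq, mulVec_transpose, ← dotProduct_mulVec,
    single_dotProduct, ← Fin.succ_zero_eq_one']
  rfl

theorem inv_fisherInfo_B_SH_apply_self (hq0 : 0 < q) (hq1 : q < 1) (hθ : ∀ k, 0 < θ k)
    (j : Fin W) :
    (fisherInfo (B_SH W q) θ)⁻¹ j j =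
      (B_SH_succInv W q * diagonal (fun i : Fin W => (B_SH W q *ᵥ θ) i.succ) *
          (B_SH_succInv W q)ᵀ) j j
        - (Pi.single 0 ((1 - q) * (B_SH W q *ᵥ θ) 1 / q ^ 2) : Fin W → ℝ) j := by
  have hq : q ≠ 0 := hq0.ne'
  have hd_pos (i : Fin W) : 0 < (B_SH W q *ᵥ θ) i.succ :=
    (mul_pos hq0 (hθ i)).trans_le (mul_le_B_SH_mulVec_succ hq0.le hq1.le (fun k => (hθ k).le) i)
  have h1q : 0 < 1 - q := by linarith
  have hd1 : 0 < (B_SH W q *ᵥ θ) 1 := Fin.succ_zero_eq_one' (n := W) ▸ hd_pos 0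
  have hc : 0 < (1 - q) * (B_SH W q *ᵥ θ) 1 / q ^ 2 := by positivity
  have hv : (B_SH_succInv W q * diagonal (fun i : Fin W => (B_SH W q *ᵥ θ) i.succ) *
      (B_SH_succInv W q)ᵀ) *ᵥ B_SH W q 0 = Pi.single 0 ((1 - q) * (B_SH W q *ᵥ θ) 1 / q ^ 2) := by
    rw [B_SH_zero_eq_transpose_mulVec hq, mulVec_mulVec, Matrix.mul_assoc, ← transpose_mul,
      B_SH_submatrix_succ_mul_succInv hq, transpose_one, Matrix.mul_one, ← mulVec_mulVec,
      diagonal_mulVec_single, B_SH_succInv_mulVec_single_zero, Fin.succ_zero_eq_one']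
    field_simp
  have hden : (B_SH W q *ᵥ θ) 0 +
      B_SH W q 0 ⬝ᵥ Pi.single 0 ((1 - q) * (B_SH W q *ᵥ θ) 1 / q ^ 2) =
      (1 - q) * (B_SH W q *ᵥ θ) 1 / q ^ 2 := by
    rw [dotProduct_single, B_SH_mulVec_zero hq]
    simp only [B_SH, Fin.coe_ofNat_eq_mod, Nat.zero_mod, ↓reduceIte, zero_add, pow_one]
    field_simp
    ring
  rw [inv_fisherInfo_apply_self (B_SH_succInv_mul_submatrix_succ hq) (fun i => (hd_pos i).ne')
    rfl (by rw [B_SH_mulVec_zero hq]; positivity) (by rw [hv, hden]; exact hc.ne'), hv, hden]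
  rcases eq_or_ne j 0 with rfl | hj
  · rw [Pi.single_eq_same]
    field_simp
  · simp [Pi.single_eq_of_ne hj]

theorem div_le_inv_fisherInfo_B_SH_apply_self (hq0 : 0 < q) (hq1 : q < 1) (hθ : ∀ k, 0 < θ k)
    {j : Fin W} (hj : j ≠ 0) : θ j / q ≤ (fisherInfo (B_SH W q) θ)⁻¹ j j := by
  have hd (m : Fin W) : q * θ m ≤ (B_SH W q *ᵥ θ) m.succ :=
    mul_le_B_SH_mulVec_succ hq0.le hq1.le (fun k => (hθ k).le) m
  rw [inv_fisherInfo_B_SH_apply_self hq0 hq1 hθ, Pi.single_eq_of_ne hj, sub_zero,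
    mul_diagonal_mul_transpose_apply_self_s17]
  calc θ j / q = B_SH_succInv W q j j ^ 2 * (q * θ j) := by
        simp only [B_SH_succInv, ↓reduceIte, Nat.left_eq_add, one_ne_zero, mul_zero, sub_zero,
          mul_one, inv_pow]
        field_simp
    _ ≤ B_SH_succInv W q j j ^ 2 * (B_SH W q *ᵥ θ) j.succ :=
        mul_le_mul_of_nonneg_left (hd j) (sq_nonneg _)
    _ ≤ ∑ m, B_SH_succInv W q j m ^ 2 * (B_SH W q *ᵥ θ) m.succ :=
        Finset.single_le_sum (f := fun m => B_SH_succInv W q j m ^ 2 * (B_SH W q *ᵥ θ) m.succ)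
          (fun m _ => mul_nonneg (sq_nonneg _) ((mul_pos hq0 (hθ m)).le.trans (hd m)))
          (Finset.mem_univ j)

end SampleAndHold

section SampleAndHoldFirstEntry

variable {V : ℕ} {q : ℝ} {θ : Fin (V + 2) → ℝ}

theorem B_SH_succInv_zero_one : B_SH_succInv (V + 2) q 0 1 = -((1 - q) / q) := by
  simp only [B_SH_succInv, one_ne_zero, ↓reduceIte, Fin.coe_ofNat_eq_mod, Nat.one_mod,
    Nat.zero_mod, zero_add, mul_one, zero_sub, neg_sub]
  ring

theorem B_SH_succInv_zero_succ_succ (m : Fin V) : B_SH_succInv (V + 2) q 0 m.succ.succ = 0 := by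
  simp [B_SH_succInv]

theorem sum_B_SH_succInv_zero_mul (f : Fin (V + 2) → ℝ) :
    ∑ m, B_SH_succInv (V + 2) q 0 m * f m = q⁻¹ * f 0 - (1 - q) / q * f 1 := by
  rw [Fin.sum_univ_succ, Fin.sum_univ_succ, Fin.succ_zero_eq_one, B_SH_succInv_zero_zero,
    B_SH_succInv_zero_one]
  simp only [B_SH_succInv_zero_succ_succ, zero_mul, Finset.sum_const_zero, add_zero]
  ring

theorem B_SH_mulVec_one (hq : q ≠ 0) :
    (B_SH (V + 2) q *ᵥ θ) 1 = q * θ 0 + (1 - q) * (B_SH (V + 2) q *ᵥ θ) 2 := by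
  have h : B_SH_succInv (V + 2) q *ᵥ ((B_SH (V + 2) q).submatrix Fin.succ id *ᵥ θ) = θ := by
    rw [mulVec_mulVec, B_SH_succInv_mul_submatrix_succ hq, one_mulVec]
  have h0 : ∑ i, B_SH_succInv (V + 2) q 0 i * (B_SH (V + 2) q *ᵥ θ) i.succ = θ 0 :=
    congrFun h 0
  rw [sum_B_SH_succInv_zero_mul, Fin.succ_zero_eq_one, Fin.succ_one_eq_two] at h0
  rw [← h0]
  field_simp
  ring

theorem inv_fisherInfo_B_SH_apply_zero (hq0 : 0 < q) (hq1 : q < 1) (hθ : ∀ k, 0 < θ k) :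
    (fisherInfo (B_SH (V + 2) q) θ)⁻¹ 0 0 = θ 0 + (1 - q) * (B_SH (V + 2) q *ᵥ θ) 2 / q ^ 2 := by
  rw [inv_fisherInfo_B_SH_apply_self hq0 hq1 hθ, mul_diagonal_mul_transpose_apply_self_s17,
    Pi.single_eq_same]
  simp_rw [sq (B_SH_succInv _ _ _ _), mul_assoc]
  rw [sum_B_SH_succInv_zero_mul, B_SH_succInv_zero_zero, B_SH_succInv_zero_one,
    Fin.succ_zero_eq_one, Fin.succ_one_eq_two, B_SH_mulVec_one hq0.ne']
  field_simp
  ring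

theorem mul_pow_mul_le_B_SH_mulVec_two (hq0 : 0 ≤ q) (hq1 : q ≤ 1) (hθ : ∀ k, 0 ≤ θ k)
    (hθsum : ∑ k, θ k = 1) : q * (1 - q) ^ V * (1 - θ 0) ≤ (B_SH (V + 2) q *ᵥ θ) 2 := by
  have htail : 1 - θ 0 = ∑ i : Fin (V + 1), θ i.succ := by
    rw [← hθsum, Fin.sum_univ_succ]; ring
  change _ ≤ ∑ k, B_SH (V + 2) q 2 k * θ k
  have h2 : 2 % (V + 2 + 1) = 2 := Nat.mod_eq_of_lt (by omega)
  have h20 : B_SH (V + 2) q 2 0 = 0 := by simp [B_SH, h2]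
  have h2succ (i : Fin (V + 1)) : B_SH (V + 2) q 2 i.succ = q * (1 - q) ^ (i : ℕ) := by
    simp [B_SH, h2]
  rw [htail, Finset.mul_sum, Fin.sum_univ_succ (f := fun k => B_SH (V + 2) q 2 k * θ k), h20,
    zero_mul, zero_add]
  refine Finset.sum_le_sum fun i _ => ?_
  rw [h2succ]
  have hpow : (1 - q) ^ V ≤ (1 - q) ^ (i : ℕ) :=
    pow_le_pow_of_le_one (by linarith) (by linarith) (Nat.lt_succ_iff.mp i.isLt)
  exact mul_le_mul_of_nonneg_right (mul_le_mul_of_nonneg_left hpow hq0) (hθ _)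

end SampleAndHoldFirstEntry

section Comparison

variable {p q : ℝ}

theorem inv_fisherInfo_B_FS_le_B_SH_apply_self {W : ℕ} [NeZero W] {θ : Fin W → ℝ}
    (hq0 : 0 < q) (hqp : q ≤ p) (hp1 : p < 1) (hθ : ∀ k, 0 < θ k) (hθsum : ∑ k, θ k = 1)
    {j : Fin W} (hj : j ≠ 0) :
    (fisherInfo (B_FS W p) θ)⁻¹ j j ≤ (fisherInfo (B_SH W q) θ)⁻¹ j j := by
  have hp0 : 0 < p := hq0.trans_le hqp
  calc (fisherInfo (B_FS W p) θ)⁻¹ j j = θ j * (1 - (1 - p) * θ j) / p :=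
        inv_fisherInfo_B_FS_apply_self hp0 hp1 hθ hθsum j
    _ ≤ θ j / p := by
        have : 0 ≤ (1 - p) * θ j := mul_nonneg (by linarith) (hθ j).le
        gcongr
        nlinarith [hθ j]
    _ ≤ θ j / q := div_le_div_of_nonneg_left (hθ j).le hq0 hqp
    _ ≤ (fisherInfo (B_SH W q) θ)⁻¹ j j :=
        div_le_inv_fisherInfo_B_SH_apply_self hq0 (hqp.trans_lt hp1) hθ hj

theorem inv_fisherInfo_B_FS_le_B_SH_apply_zero {V : ℕ} {θ : Fin (V + 2) → ℝ}
    (hq0 : 0 < q) (hqp : q ≤ p) (hp1 : p < 1) (hθ : ∀ k, 0 < θ k) (hθsum : ∑ k, θ k = 1)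
    (htail : q * (θ 0 * (1 - θ 0)) ≤ (B_SH (V + 2) q *ᵥ θ) 2) :
    (fisherInfo (B_FS (V + 2) p) θ)⁻¹ 0 0 ≤ (fisherInfo (B_SH (V + 2) q) θ)⁻¹ 0 0 := by
  have hp0 : 0 < p := hq0.trans_le hqp
  have hθ1 : θ 0 ≤ 1 := hθsum ▸ Finset.single_le_sum (fun k _ => (hθ k).le) (Finset.mem_univ 0)
  have hvar : 0 ≤ θ 0 * (1 - θ 0) := mul_nonneg (hθ 0).le (by linarith)
  have hodds : (1 - p) / p ≤ (1 - q) / q := by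
    rw [sub_div, sub_div, div_self hp0.ne', div_self hq0.ne']
    gcongr
  rw [inv_fisherInfo_B_FS_apply_self hp0 hp1 hθ hθsum,
    inv_fisherInfo_B_SH_apply_zero hq0 (hqp.trans_lt hp1) hθ]
  calc θ 0 * (1 - (1 - p) * θ 0) / p = θ 0 + (1 - p) / p * (θ 0 * (1 - θ 0)) := by
        field_simp; ring
    _ ≤ θ 0 + (1 - q) / q * (θ 0 * (1 - θ 0)) := by gcongr
    _ ≤ θ 0 + (1 - q) / q * ((B_SH (V + 2) q *ᵥ θ) 2 / q) := by
        have : 0 ≤ (1 - q) / q := div_nonneg (by linarith) hq0.le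
        gcongr
        rwa [le_div_iff₀ hq0, mul_comm]
    _ = θ 0 + (1 - q) * (B_SH (V + 2) q *ᵥ θ) 2 / q ^ 2 := by ring

end Comparison

theorem exists_forall_inv_fisherInfo_B_FS_le_B_SH_apply_zero {V : ℕ} {θ : Fin (V + 2) → ℝ}
    (hθ : ∀ k, 0 < θ k) (hθsum : ∑ k, θ k = 1) :
    ∃ p₀ ∈ Set.Ioo (0 : ℝ) 1, ∀ p q : ℝ, 0 < q → q ≤ p → p ≤ p₀ →
      (fisherInfo (B_FS (V + 2) p) θ)⁻¹ 0 0 ≤ (fisherInfo (B_SH (V + 2) q) θ)⁻¹ 0 0 := by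
  have hθ01 : θ 0 + θ 1 ≤ 1 := by
    rw [← hθsum, Fin.sum_univ_succ, Fin.sum_univ_succ, Fin.succ_zero_eq_one]
    linarith [Finset.sum_nonneg (s := Finset.univ) fun (i : Fin V) _ => (hθ i.succ.succ).le]
  obtain ⟨p₀, hp₀, hpow⟩ := exists_le_one_sub_pow (hθ 0) (by linarith [hθ 1]) V
  refine ⟨p₀, hp₀, fun p q hq hqp hp => ?_⟩
  refine inv_fisherInfo_B_FS_le_B_SH_apply_zero hq hqp (hp.trans_lt hp₀.2) hθ hθsum ?_
  calc q * (θ 0 * (1 - θ 0)) ≤ q * (1 - q) ^ V * (1 - θ 0) := by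
        have : 0 ≤ 1 - θ 0 := by linarith [hθ 1]
        have := hpow q (hqp.trans hp)
        rw [mul_assoc]
        gcongr
    _ ≤ (B_SH (V + 2) q *ᵥ θ) 2 :=
      mul_pow_mul_le_B_SH_mulVec_two hq.le (by linarith [hp₀.2]) (fun k => (hθ k).le) hθsum

/-- For `0 < p_p ≤ p < 1`:
(a) for `2 ≤ j ≤ W`, `(J_FS(p)⁻¹)_{jj} ≤ (J_SH(p_p)⁻¹)_{jj}`;
(b) if `W = 2`, or `W > 2` and `θ₂ ≥ θ₁(1−θ₁)`, the same holds at `j = 1`;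
(c) for any `θ` there is `p₀ ∈ (0,1)` such that the `j = 1` comparison holds whenever
`0 < p_p ≤ p ≤ p₀`. Lean index `j : Fin W` corresponds to size `j+1`. -/
theorem stmt_17 (W : ℕ) (hW : 2 ≤ W)
    (θ : Fin W → ℝ) (hθpos : ∀ k, 0 < θ k) (hθsum : ∑ k, θ k = 1)
    (p pp : ℝ) (hpp0 : 0 < pp) (hppp : pp ≤ p) (hp1 : p < 1) :
    (∀ j : Fin W, 1 ≤ (j : ℕ) →
      (fisherInfo (B_FS W p) θ)⁻¹ j j ≤ (fisherInfo (B_SH W pp) θ)⁻¹ j j) ∧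
    ((W = 2 ∨ (2 < W ∧ θ ⟨0, by omega⟩ * (1 - θ ⟨0, by omega⟩) ≤ θ ⟨1, by omega⟩)) →
      (fisherInfo (B_FS W p) θ)⁻¹ ⟨0, by omega⟩ ⟨0, by omega⟩ ≤
        (fisherInfo (B_SH W pp) θ)⁻¹ ⟨0, by omega⟩ ⟨0, by omega⟩) ∧
    (∃ p₀ ∈ Set.Ioo (0 : ℝ) 1, ∀ p' pp' : ℝ, 0 < pp' → pp' ≤ p' → p' ≤ p₀ →
      (fisherInfo (B_FS W p') θ)⁻¹ ⟨0, by omega⟩ ⟨0, by omega⟩ ≤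
        (fisherInfo (B_SH W pp') θ)⁻¹ ⟨0, by omega⟩ ⟨0, by omega⟩) := by
  obtain ⟨V, rfl⟩ : ∃ V, W = V + 2 := ⟨W - 2, by omega⟩
  simp only [Fin.mk_zero, Fin.mk_one]
  refine ⟨fun j hj => inv_fisherInfo_B_FS_le_B_SH_apply_self hpp0 hppp hp1 hθpos hθsum
    (Fin.pos_iff_ne_zero.mp hj), fun hcase => ?_, ?_⟩
  · have hvar : θ 0 * (1 - θ 0) ≤ θ 1 := by
      rcases hcase with hV | ⟨-, h⟩
      · obtain rfl : V = 0 := by omega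
        rw [Fin.sum_univ_two] at hθsum
        nlinarith [hθpos 0, hθpos 1]
      · exact h
    refine inv_fisherInfo_B_FS_le_B_SH_apply_zero hpp0 hppp hp1 hθpos hθsum ?_
    calc pp * (θ 0 * (1 - θ 0)) ≤ pp * θ 1 := by gcongr
      _ ≤ (B_SH (V + 2) pp *ᵥ θ) 2 :=
        Fin.succ_one_eq_two ▸ mul_le_B_SH_mulVec_succ hpp0.le (hppp.trans hp1.le)
          (fun k => (hθpos k).le) 1
  · exact exists_forall_inv_fisherInfo_B_FS_le_B_SH_apply_zero hθpos hθsum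
end
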